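/- arXiv:0911.3789 — 7 statements merged into one kernel-verified Lean document; each statement's English description precedes it below -/
import Mathlib

section
/- Let ε₀ > 0 and define stopping times τ₀ = 0, τ_{n+1} = inf{ t ≥ τ_n : X_t − X_{τ_n} ∉ (−log(1+ε₀), log(1+ε₀)) } ∧ T, random variables R_n = sign(X_{τ_n} − X_{τ_{n−1}}) if τ_n < T and R_n = 0 if τ_n = T, and Z_0 = Y_0 = exp(X_0), Z_n = Z_0 (1+ε₀)^{R_1 + ⋯ + R_n}. Then for every n ≥ 0, (1+ε₀)^{−1} ≤ Y_{τ_n} / Z_n ≤ 1 + ε₀ almost surely, where Y_t = exp(X_t). -/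
open MeasureTheory Set Filter

noncomputable section

/-- The stopping times `τ₀ = 0`,
`τ_{n+1} = inf{ t ≥ τ_n : X_t − X_{τ_n} ∉ (−log(1+ε₀), log(1+ε₀)) } ∧ T`.
(The infimum is taken over the set together with `T`, which encodes taking the
minimum with `T` and avoids junk values for the empty set.) -/
def tauSeq {Ω : Type*} (X : ℝ → Ω → ℝ) (T ε₀ : ℝ) : ℕ → Ω → ℝ
  | 0 => fun _ => 0
  | n + 1 => fun ω =>
      sInf ({t | tauSeq X T ε₀ n ω ≤ t ∧
        X t ω - X (tauSeq X T ε₀ n ω) ω ∉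
          Ioo (-Real.log (1 + ε₀)) (Real.log (1 + ε₀))} ∪ {T})

/-- `R_n = sign(X_{τ_n} − X_{τ_{n−1}})` if `τ_n < T`, and `R_n = 0` if `τ_n = T`
(for `n ≥ 1`; the value `R_0 = 0` is irrelevant). -/
def Rseq {Ω : Type*} (X : ℝ → Ω → ℝ) (T ε₀ : ℝ) : ℕ → Ω → ℝ
  | 0 => fun _ => 0
  | n + 1 => fun ω =>
      if tauSeq X T ε₀ (n + 1) ω < T then
        Real.sign (X (tauSeq X T ε₀ (n + 1) ω) ω - X (tauSeq X T ε₀ n ω) ω)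
      else 0

/-- `Z_0 = Y_0 = exp(X_0)` and `Z_n = Z_0 (1+ε₀)^{R_1 + ⋯ + R_n}`. -/
def Zseq {Ω : Type*} (X : ℝ → Ω → ℝ) (T ε₀ : ℝ) (n : ℕ) (ω : Ω) : ℝ :=
  Real.exp (X 0 ω) * (1 + ε₀) ^ (∑ i ∈ Finset.range n, Rseq X T ε₀ (i + 1) ω)

/-- First step of the proof of Theorem 2.2 of the paper: with `τ_n`, `R_n`, `Z_n` as above
and `Y_t = exp(X_t)`, one has `(1+ε₀)⁻¹ ≤ Y_{τ_n}/Z_n ≤ 1+ε₀` a.s. for every `n ≥ 0`. -/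
theorem Y_tau_Z_ratio_bounds {Ω : Type*} {m : MeasurableSpace Ω} (P : Measure Ω)
    [IsProbabilityMeasure P] (ℱ : Filtration ℝ m) (T : ℝ) (hT : 0 < T)
    (X : ℝ → Ω → ℝ) (hadp : Adapted ℱ X)
    (hcont : ∀ ω, ContinuousOn (fun t => X t ω) (Icc 0 T))
    (htriv : ∀ s : Set Ω, MeasurableSet[ℱ 0] s → P s = 0 ∨ P s = 1)
    (ε₀ : ℝ) (hε₀ : 0 < ε₀) :
    ∀ n : ℕ, ∀ᵐ ω ∂P,
      (1 + ε₀)⁻¹ ≤ Real.exp (X (tauSeq X T ε₀ n ω) ω) / Zseq X T ε₀ n ω ∧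
      Real.exp (X (tauSeq X T ε₀ n ω) ω) / Zseq X T ε₀ n ω ≤ 1 + ε₀ := by
  have h1ε : (0:ℝ) < 1 + ε₀ := by linarith
  have hL : 0 < Real.log (1 + ε₀) := Real.log_pos (by linarith)
  set L := Real.log (1 + ε₀) with hLdef
  have hexpL : Real.exp L = 1 + ε₀ := Real.exp_log h1ε
  have hinv1 : (1 + ε₀)⁻¹ ≤ 1 := by
    rw [inv_le_one₀ h1ε]; linarith
  have Zpos : ∀ n ω, 0 < Zseq X T ε₀ n ω := fun n ω =>
    mul_pos (Real.exp_pos _) (Real.rpow_pos_of_pos h1ε _)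
  have Zsucc : ∀ n ω, Zseq X T ε₀ (n+1) ω
      = Zseq X T ε₀ n ω * (1 + ε₀) ^ (Rseq X T ε₀ (n+1) ω) := by
    intro n ω
    simp [Zseq, Finset.sum_range_succ, Real.rpow_add h1ε, mul_assoc]
  have key : ∀ ω n, 0 ≤ tauSeq X T ε₀ n ω ∧ tauSeq X T ε₀ n ω ≤ T ∧
      (tauSeq X T ε₀ n ω < T →
        Real.exp (X (tauSeq X T ε₀ n ω) ω) = Zseq X T ε₀ n ω) ∧
      (1 + ε₀)⁻¹ * Zseq X T ε₀ n ω ≤ Real.exp (X (tauSeq X T ε₀ n ω) ω) ∧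
      Real.exp (X (tauSeq X T ε₀ n ω) ω) ≤ (1 + ε₀) * Zseq X T ε₀ n ω := by
    intro ω n
    induction n with
    | zero =>
      have hτ : tauSeq X T ε₀ 0 ω = 0 := rfl
      have hZ : Zseq X T ε₀ 0 ω = Real.exp (X 0 ω) := by simp [Zseq]
      rw [hτ, hZ]
      have he := Real.exp_pos (X 0 ω)
      refine ⟨le_refl _, hT.le, fun _ => rfl, ?_, ?_⟩
      · nlinarith
      · nlinarith
    | succ n ih =>
      obtain ⟨ha0, haT, haeq, halow, hahigh⟩ := ih
      set a := tauSeq X T ε₀ n ω with ha_def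
      set b := tauSeq X T ε₀ (n+1) ω with hb_def
      set S : Set ℝ := {t | a ≤ t ∧ X t ω - X a ω ∉ Ioo (-L) L} ∪ {T} with hS_def
      have hbS : b = sInf S := rfl
      have hST : T ∈ S := Or.inr rfl
      have hSsub : S ⊆ Ici a := by
        rintro t (⟨h1, -⟩ | rfl)
        · exact h1
        · exact haT
      have hSbdd : BddBelow S := ⟨a, fun t ht => hSsub ht⟩
      have hSne : S.Nonempty := ⟨T, hST⟩
      set S' : Set ℝ := (Icc a T ∩ {t | X t ω - X a ω ∉ Ioo (-L) L}) ∪ {T} with hS'_def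
      have hS'sub : S' ⊆ S := by
        rintro t (⟨⟨h1, -⟩, h2⟩ | rfl)
        · exact Or.inl ⟨h1, h2⟩
        · exact Or.inr rfl
      have hS'T : T ∈ S' := Or.inr rfl
      have hS'ne : S'.Nonempty := ⟨T, hS'T⟩
      have hS'bdd : BddBelow S' := hSbdd.mono hS'sub
      have hS'closed : IsClosed S' := by
        apply IsClosed.union
        · have hc : ContinuousOn (fun t => X t ω - X a ω) (Icc a T) :=
            ((hcont ω).mono (Icc_subset_Icc ha0 le_rfl)).sub continuousOn_const
          have h2 : IsClosed (Icc a T ∩ (fun t => X t ω - X a ω) ⁻¹' (Ioo (-L) L)ᶜ) :=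
            hc.preimage_isClosed_of_isClosed isClosed_Icc isOpen_Ioo.isClosed_compl
          exact h2
        · exact isClosed_singleton
      have hinf_eq : sInf S = sInf S' := by
        apply le_antisymm
        · exact csInf_le_csInf hSbdd hS'ne hS'sub
        · apply le_csInf hSne
          rintro t (⟨h1, h2⟩ | rfl)
          · rcases le_or_gt t T with h | h
            · exact csInf_le hS'bdd (Or.inl ⟨⟨h1, h⟩, h2⟩)
            · exact le_trans (csInf_le hS'bdd hS'T) h.le
          · exact csInf_le hS'bdd hS'T
      have hbmem : b ∈ S' := by
        rw [hbS, hinf_eq]; exact hS'closed.csInf_mem hS'ne hS'bdd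
      have hab : a ≤ b := by
        rcases hbmem with ⟨⟨h, -⟩, -⟩ | h
        · exact h
        · exact h ▸ haT
      have hbT : b ≤ T := by
        rcases hbmem with ⟨⟨-, h⟩, -⟩ | h
        · exact h
        · exact le_of_eq h
      have hb0 : 0 ≤ b := le_trans ha0 hab
      have hΔ : X b ω - X a ω ∈ Icc (-L) L := by
        rcases eq_or_lt_of_le hab with heq | hlt
        · rw [← heq]
          simp [hL.le, neg_nonpos.mpr hL.le]
        · have hIoo : ∀ t ∈ Ico a b, X t ω - X a ω ∈ Ioo (-L) L := by
            rintro t ⟨hta, htb⟩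
            by_contra hcon
            have hmem : t ∈ S := Or.inl ⟨hta, hcon⟩
            have := csInf_le hSbdd hmem
            rw [← hbS] at this
            linarith
          have hsub : Ico a b ⊆ Icc 0 T := fun t ht =>
            ⟨le_trans ha0 ht.1, le_trans ht.2.le hbT⟩
          have cw : ContinuousWithinAt (fun t => X t ω - X a ω) (Ico a b) b := by
            have h1 : ContinuousWithinAt (fun t => X t ω - X a ω) (Icc 0 T) b :=
              ((hcont ω) b ⟨hb0, hbT⟩).sub continuousWithinAt_const
            exact h1.mono hsub
          have hcl : b ∈ closure (Ico a b) := by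
            rw [closure_Ico hlt.ne]
            exact right_mem_Icc.mpr hab
          haveI : (nhdsWithin b (Ico a b)).NeBot := mem_closure_iff_nhdsWithin_neBot.mp hcl
          exact isClosed_Icc.mem_of_tendsto cw
            (eventually_mem_nhdsWithin.mono fun t ht => Ioo_subset_Icc_self (hIoo t ht))
      have hZs := Zsucc n ω
      rcases lt_or_eq_of_le hbT with hblt | hbeq
      · -- b < T
        have hnotIoo : X b ω - X a ω ∉ Ioo (-L) L := by
          rcases hbmem with ⟨-, h⟩ | h
          · exact h
          · exact absurd h (by simp only [mem_singleton_iff]; linarith)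
        have hR : Rseq X T ε₀ (n+1) ω = Real.sign (X b ω - X a ω) := by
          simp only [Rseq]
          rw [if_pos]
          exact hblt
        have hcases : X b ω - X a ω = L ∨ X b ω - X a ω = -L := by
          obtain ⟨h1, h2⟩ := hΔ
          simp only [mem_Ioo, not_and, not_lt] at hnotIoo
          rcases eq_or_lt_of_le h1 with heq | hlt'
          · exact Or.inr heq.symm
          · exact Or.inl (le_antisymm h2 (hnotIoo hlt'))
        have hexpR : Real.exp (X b ω - X a ω) = (1 + ε₀) ^ (Rseq X T ε₀ (n+1) ω) := by
          rcases hcases with h | h <;> rw [hR, h]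
          · rw [Real.sign_of_pos hL, Real.rpow_one, hexpL]
          · rw [Real.sign_of_neg (neg_neg_of_pos hL), Real.exp_neg, hexpL]
            rw [show ((-1 : ℝ)) = ((-1 : ℤ) : ℝ) by norm_num, Real.rpow_intCast,
              zpow_neg_one]
        have heq1 : Real.exp (X a ω) = Zseq X T ε₀ n ω := haeq (lt_of_le_of_lt hab hblt)
        have hexpb : Real.exp (X b ω) = Zseq X T ε₀ (n+1) ω := by
          have hxb : X b ω = X a ω + (X b ω - X a ω) := by ring
          rw [hxb, Real.exp_add, heq1, hexpR, hZs]
        refine ⟨hb0, hbT, fun _ => hexpb, ?_, ?_⟩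
        · rw [hexpb]
          nlinarith [Zpos (n+1) ω]
        · rw [hexpb]
          nlinarith [Zpos (n+1) ω]
      · -- b = T
        have hR0 : Rseq X T ε₀ (n+1) ω = 0 := by
          simp only [Rseq]
          rw [if_neg]
          rw [← hb_def, hbeq]
          exact lt_irrefl T
        have hZeq : Zseq X T ε₀ (n+1) ω = Zseq X T ε₀ n ω := by
          rw [hZs, hR0, Real.rpow_zero, mul_one]
        have hnotlt : ¬ b < T := by rw [hbeq]; exact lt_irrefl T
        rcases eq_or_lt_of_le hab with haeq2 | halt
        · refine ⟨hb0, hbT, fun h => absurd h hnotlt, ?_, ?_⟩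
          · rw [hZeq, ← haeq2]; exact halow
          · rw [hZeq, ← haeq2]; exact hahigh
        · have h1 : Real.exp (X a ω) = Zseq X T ε₀ n ω := haeq (lt_of_lt_of_le halt hbT)
          have hlow' : (1 + ε₀)⁻¹ ≤ Real.exp (X b ω - X a ω) := by
            have := Real.exp_le_exp.mpr hΔ.1
            rwa [Real.exp_neg, hexpL] at this
          have hhigh' : Real.exp (X b ω - X a ω) ≤ 1 + ε₀ := by
            have := Real.exp_le_exp.mpr hΔ.2
            rwa [hexpL] at this
          have hexpb : Real.exp (X b ω) = Zseq X T ε₀ n ω * Real.exp (X b ω - X a ω) := by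
            rw [← h1, ← Real.exp_add]; ring_nf
          refine ⟨hb0, hbT, fun h => absurd h hnotlt, ?_, ?_⟩
          · rw [hexpb, hZeq]
            nlinarith [Zpos n ω]
          · rw [hexpb, hZeq]
            nlinarith [Zpos n ω]
  intro n
  refine Filter.Eventually.of_forall fun ω => ?_
  obtain ⟨-, -, -, hlow, hhigh⟩ := key ω n
  exact ⟨(le_div_iff₀ (Zpos n ω)).mpr hlow, (div_le_iff₀ (Zpos n ω)).mpr hhigh⟩

end
end

section
/- Let ε₀ > 0 and suppose that for every h ∈ (0,T) and every stopping time τ taking values in [0, T−h), P(F_X^j(τ, h, log(1+ε₀), log(1+ε₀)) | 𝓕_τ) > 0 almost surely for each j ∈ {−1, 0, 1}. Define stopping times τ₀ = 0, τ_{n+1} = inf{ t ≥ τ_n : X_t − X_{τ_n} ∉ (−log(1+ε₀), log(1+ε₀)) } ∧ T, and R_n = sign(X_{τ_n} − X_{τ_{n−1}}) if τ_n < T, R_n = 0 if τ_n = T. Then for every n ≥ 1, every j ∈ {−1, 0, 1}, and every A ∈ 𝓕_{τ_{n−1}} with A ⊆ {τ_{n−1} < T} and P(A) > 0, one has P(A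 ∩ {R_n = j}) > 0. -/
/-!
Some `B = A ∩ {τ_{n−1} ≤ s}` with `s < T` still has positive probability. Gluing `τ_{n−1}` on `B`
with the constant `s` off `B` gives a stopping time `τ` with `B ∈ ℱ_τ`, whether or not `τ_{n−1}`
is one, so `P(F^{j'}(τ) | ℱ_τ) > 0` a.s. forces `P(B ∩ F^{j'}(τ)) > 0`. On `B ∩ F^{−j}(τ)` the
path started at `τ_{n−1}` must leave the band `(−log(1+ε₀), log(1+ε₀))` through the side
prescribed by `j`, or for `j = 0` not leave it before `T`; continuity puts `X` on the boundary
of the band at the exit time, so `R_n = j` there.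
-/

open MeasureTheory Set Filter

noncomputable section

/-- The events `F_X^j(τ, h, δ, c)` from the paper: for `j = 0`,
`{sup_{t∈[0,T−τ)} |X_{τ+t} − X_τ| < δ}`; for `j = 1`,
`{sup_{t∈[0,h]} (X_{τ+t} − X_τ) < δ} ∩ {sup_{t∈[h,T−τ)} (X_{τ+t} − X_τ) < −c}`; for `j = −1`,
`{inf_{t∈[0,h]} (X_{τ+t} − X_τ) > −δ} ∩ {inf_{t∈[h,T−τ)} (X_{τ+t} − X_τ) > c}`. -/
def FXev {Ω : Type*} (X : ℝ → Ω → ℝ) (T : ℝ) (τ : Ω → ℝ) (h δ c : ℝ) (j : ℤ) : Set Ω :=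
  if j = 0 then
    {ω | sSup ((fun t => |X (τ ω + t) ω - X (τ ω) ω|) '' Ico 0 (T - τ ω)) < δ}
  else if j = 1 then
    {ω | sSup ((fun t => X (τ ω + t) ω - X (τ ω) ω) '' Icc 0 h) < δ ∧
         sSup ((fun t => X (τ ω + t) ω - X (τ ω) ω) '' Ico h (T - τ ω)) < -c}
  else
    {ω | -δ < sInf ((fun t => X (τ ω + t) ω - X (τ ω) ω) '' Icc 0 h) ∧
         c < sInf ((fun t => X (τ ω + t) ω - X (τ ω) ω) '' Ico h (T - τ ω))}

section ConditionalPositivity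

variable {Ω : Type*} {m m₀ : MeasurableSpace Ω} {μ : Measure[m₀] Ω}

theorem not_ae_restrict_eq_zero_of_condExp_pos {f : Ω → ℝ} (hm : m ≤ m₀)
    [SigmaFinite (μ.trim hm)] (hpos : ∀ᵐ ω ∂μ, 0 < μ[f | m] ω) {B : Set Ω}
    (hB : MeasurableSet[m] B) (hμB : μ B ≠ 0) : ¬ f =ᵐ[μ.restrict B] 0 := by
  intro hf
  by_cases hint : Integrable f μ
  · have hposB : ∀ᵐ ω ∂μ.restrict B, 0 < μ[f | m] ω := ae_restrict_of_ae hpos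
    have hzero : μ[f | m] =ᵐ[μ.restrict B] 0 := by
      rw [← setIntegral_eq_zero_iff_of_nonneg_ae (hposB.mono fun _ h => h.le)
        integrable_condExp.integrableOn, setIntegral_condExp hm hint hB, integral_congr_ae hf]
      simp
    have hfalse : ∀ᵐ ω ∂μ.restrict B, False := (hposB.and hzero).mono fun _ h => h.1.ne' h.2
    exact hμB (by simpa using hfalse)
  · rw [condExp_of_not_integrable hint] at hpos
    have hμ : μ = 0 := by simpa using hpos
    simp [hμ] at hμB

theorem measure_inter_pos_of_condExp_indicator_pos [IsFiniteMeasure μ] (hm : m ≤ m₀)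
    {F : Set Ω} (hpos : ∀ᵐ ω ∂μ, 0 < μ[F.indicator (fun _ => (1 : ℝ)) | m] ω) {B : Set Ω}
    (hB : MeasurableSet[m] B) (hμB : 0 < μ B) : 0 < μ (B ∩ F) := by
  refine pos_iff_ne_zero.mpr fun hBF => ?_
  refine not_ae_restrict_eq_zero_of_condExp_pos hm hpos hB hμB.ne' ?_
  rw [EventuallyEq, ae_restrict_iff' (hm B hB)]
  filter_upwards [measure_eq_zero_iff_ae_notMem.mp hBF] with ω hω hωB
  exact indicator_of_notMem (fun hωF => hω ⟨hωB, hωF⟩) _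

end ConditionalPositivity

def exitTime (f : ℝ → ℝ) (U : Set ℝ) (a T : ℝ) : ℝ :=
  sInf ({t | a ≤ t ∧ f t ∉ U} ∪ {T})

section ExitTime

variable {f : ℝ → ℝ} {U : Set ℝ} {a T : ℝ}

theorem min_mem_lowerBounds_exitSet : min a T ∈ lowerBounds ({t | a ≤ t ∧ f t ∉ U} ∪ {T}) := by
  rintro t (⟨hat, -⟩ | rfl)
  exacts [min_le_of_left_le hat, min_le_right a t]

theorem isGLB_exitTime : IsGLB ({t | a ≤ t ∧ f t ∉ U} ∪ {T}) (exitTime f U a T) :=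
  isGLB_csInf ⟨T, Or.inr rfl⟩ ⟨min a T, min_mem_lowerBounds_exitSet⟩

theorem exitTime_le : exitTime f U a T ≤ T :=
  isGLB_exitTime.1 (Or.inr rfl)

theorem min_le_exitTime : min a T ≤ exitTime f U a T :=
  isGLB_exitTime.2 min_mem_lowerBounds_exitSet

theorem exitTime_le_of_notMem {v : ℝ} (hav : a ≤ v) (hv : f v ∉ U) : exitTime f U a T ≤ v :=
  isGLB_exitTime.1 (Or.inl ⟨hav, hv⟩)

theorem exitTime_notMem_of_lt (hf : ContinuousOn f (Icc a T)) (hU : IsOpen U)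
    (hlt : exitTime f U a T < T) : a ≤ exitTime f U a T ∧ f (exitTime f U a T) ∉ U := by
  have hglb := (isGLB_exitTime (f := f) (U := U) (a := a) (T := T)).inter_Iic_of_mem
    (mem_union_right _ rfl)
  have hclosed : IsClosed (({t | a ≤ t ∧ f t ∉ U} ∪ {T}) ∩ Iic T) := by
    convert (hf.preimage_isClosed_of_isClosed isClosed_Icc hU.isClosed_compl).union
      (isClosed_singleton (x := T)) using 1
    ext t
    constructor <;> aesop
  obtain ⟨h | h, -⟩ := hglb.mem_of_isClosed ⟨T, mem_union_right _ rfl, le_refl T⟩ hclosed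
  exacts [h, absurd h hlt.ne]

theorem exitTime_eq_of_forall_mem (hf : ContinuousOn f (Icc a T)) (hU : IsOpen U)
    (hmem : ∀ t ∈ Ico a T, f t ∈ U) : exitTime f U a T = T := by
  refine exitTime_le.eq_or_lt.resolve_right fun hlt => ?_
  obtain ⟨hat, hnot⟩ := exitTime_notMem_of_lt hf hU hlt
  exact hnot (hmem _ ⟨hat, hlt⟩)

variable {l r v : ℝ}

theorem exitTime_lt_and_apply_le (hf : ContinuousOn f (Icc a T)) (hav : a ≤ v) (hvT : v < T)
    (hbelow : ∀ t ∈ Icc a v, f t < r) (hv : f v ≤ l) :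
    exitTime f (Ioo l r) a T < T ∧ f (exitTime f (Ioo l r) a T) ≤ l := by
  have hle : exitTime f (Ioo l r) a T ≤ v := exitTime_le_of_notMem hav fun h => hv.not_gt h.1
  have hlt := hle.trans_lt hvT
  obtain ⟨hat, hnot⟩ := exitTime_notMem_of_lt hf isOpen_Ioo hlt
  exact ⟨hlt, not_lt.mp fun h => hnot ⟨h, hbelow _ ⟨hat, hle⟩⟩⟩

theorem exitTime_lt_and_le_apply (hf : ContinuousOn f (Icc a T)) (hav : a ≤ v) (hvT : v < T)
    (habove : ∀ t ∈ Icc a v, l < f t) (hv : r ≤ f v) :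
    exitTime f (Ioo l r) a T < T ∧ r ≤ f (exitTime f (Ioo l r) a T) := by
  have hle : exitTime f (Ioo l r) a T ≤ v := exitTime_le_of_notMem hav fun h => hv.not_gt h.2
  have hlt := hle.trans_lt hvT
  obtain ⟨hat, hnot⟩ := exitTime_notMem_of_lt hf isOpen_Ioo hlt
  exact ⟨hlt, not_lt.mp fun h => hnot ⟨habove _ ⟨hat, hle⟩, h⟩⟩

end ExitTime

section Pathwise

variable {Ω : Type*} {X : ℝ → Ω → ℝ} {T ε₀ : ℝ}

theorem tauSeq_succ (n : ℕ) (ω : Ω) :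
    tauSeq X T ε₀ (n + 1) ω =
      exitTime (fun t => X t ω - X (tauSeq X T ε₀ n ω) ω)
        (Ioo (-Real.log (1 + ε₀)) (Real.log (1 + ε₀))) (tauSeq X T ε₀ n ω) T :=
  rfl

theorem Rseq_succ (n : ℕ) (ω : Ω) :
    Rseq X T ε₀ (n + 1) ω =
      if tauSeq X T ε₀ (n + 1) ω < T then
        Real.sign (X (tauSeq X T ε₀ (n + 1) ω) ω - X (tauSeq X T ε₀ n ω) ω)
      else 0 :=
  rfl

theorem tauSeq_nonneg (hT : 0 ≤ T) (n : ℕ) (ω : Ω) : 0 ≤ tauSeq X T ε₀ n ω := by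
  induction n with
  | zero => exact le_rfl
  | succ n ih => exact (le_min ih hT).trans min_le_exitTime

variable {ω : Ω} {s : ℝ}

theorem continuousOn_increment (hcont : ContinuousOn (fun t => X t ω) (Icc 0 T)) (hs : 0 ≤ s) :
    ContinuousOn (fun t => X t ω - X s ω) (Icc s T) :=
  (hcont.mono (Icc_subset_Icc_left hs)).sub continuousOn_const

theorem continuousOn_shifted_increment (hcont : ContinuousOn (fun t => X t ω) (Icc 0 T))
    (hs : 0 ≤ s) : ContinuousOn (fun t => X (s + t) ω - X s ω) (Icc 0 (T - s)) := by
  refine (hcont.comp (continuousOn_const.add continuousOn_id) fun t ht => ?_).sub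
    continuousOn_const
  exact ⟨add_nonneg hs ht.1, show s + t ≤ T by linarith [ht.2]⟩

variable {τ : Ω → ℝ} {n : ℕ} {h : ℝ}

theorem Rseq_succ_eq_zero (hcont : ContinuousOn (fun t => X t ω) (Icc 0 T)) (hT : 0 ≤ T)
    (hτ : τ ω = tauSeq X T ε₀ n ω)
    (hF : ω ∈ FXev X T τ h (Real.log (1 + ε₀)) (Real.log (1 + ε₀)) 0) :
    Rseq X T ε₀ (n + 1) ω = 0 := by
  set s := tauSeq X T ε₀ n ω
  have hs : 0 ≤ s := tauSeq_nonneg hT n ω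
  rw [FXev, if_pos rfl, mem_ofPred_eq, hτ] at hF
  have hbdd := (isCompact_Icc.bddAbove_image (continuousOn_shifted_increment hcont hs).abs).mono
    (image_mono Ico_subset_Icc_self)
  have hexit : tauSeq X T ε₀ (n + 1) ω = T := by
    refine exitTime_eq_of_forall_mem (continuousOn_increment hcont hs) isOpen_Ioo fun t ht => ?_
    have := (le_csSup hbdd ⟨t - s, ⟨sub_nonneg.2 ht.1, by linarith [ht.2]⟩, rfl⟩).trans_lt hF
    simpa [abs_lt] using this
  rw [Rseq_succ, if_neg hexit.not_lt]

theorem Rseq_succ_eq_neg_one (hcont : ContinuousOn (fun t => X t ω) (Icc 0 T)) (hT : 0 ≤ T)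
    (hτ : τ ω = tauSeq X T ε₀ n ω) (hh : 0 ≤ h) (hhT : tauSeq X T ε₀ n ω + h < T)
    (hF : ω ∈ FXev X T τ h (Real.log (1 + ε₀)) (Real.log (1 + ε₀)) 1) :
    Rseq X T ε₀ (n + 1) ω = -1 := by
  set s := tauSeq X T ε₀ n ω
  have hs : 0 ≤ s := tauSeq_nonneg hT n ω
  rw [FXev, if_neg one_ne_zero, if_pos rfl, mem_ofPred_eq, hτ] at hF
  obtain ⟨hnear, hfar⟩ := hF
  have hbdd {I : Set ℝ} (hI : I ⊆ Icc 0 (T - s)) :=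
    (isCompact_Icc.bddAbove_image (continuousOn_shifted_increment hcont hs)).mono (image_mono hI)
  have hbelow : ∀ t ∈ Icc s (s + h), X t ω - X s ω < Real.log (1 + ε₀) := fun t ht => by
    have := (le_csSup (hbdd (Icc_subset_Icc_right (by linarith)))
      ⟨t - s, ⟨sub_nonneg.2 ht.1, by linarith [ht.2]⟩, rfl⟩).trans_lt hnear
    simpa using this
  have hend : X (s + h) ω - X s ω ≤ -Real.log (1 + ε₀) :=
    (le_csSup (hbdd (I := Ico h (T - s)) fun x hx => ⟨hh.trans hx.1, hx.2.le⟩)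
      ⟨h, ⟨le_rfl, by linarith⟩, rfl⟩).trans hfar.le
  have hδ : 0 < Real.log (1 + ε₀) := by simpa using hbelow s ⟨le_rfl, by linarith⟩
  obtain ⟨hlt, hle⟩ := exitTime_lt_and_apply_le (continuousOn_increment hcont hs)
    (le_add_of_nonneg_right hh) hhT hbelow hend
  rw [Rseq_succ, tauSeq_succ, if_pos hlt]
  exact Real.sign_of_neg (by linarith)

theorem Rseq_succ_eq_one (hcont : ContinuousOn (fun t => X t ω) (Icc 0 T)) (hT : 0 ≤ T)
    (hτ : τ ω = tauSeq X T ε₀ n ω) (hh : 0 ≤ h) (hhT : tauSeq X T ε₀ n ω + h < T)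
    (hF : ω ∈ FXev X T τ h (Real.log (1 + ε₀)) (Real.log (1 + ε₀)) (-1)) :
    Rseq X T ε₀ (n + 1) ω = 1 := by
  set s := tauSeq X T ε₀ n ω
  have hs : 0 ≤ s := tauSeq_nonneg hT n ω
  rw [FXev, if_neg (by norm_num), if_neg (by norm_num), mem_ofPred_eq, hτ] at hF
  obtain ⟨hnear, hfar⟩ := hF
  have hbdd {I : Set ℝ} (hI : I ⊆ Icc 0 (T - s)) :=
    (isCompact_Icc.bddBelow_image (continuousOn_shifted_increment hcont hs)).mono (image_mono hI)
  have habove : ∀ t ∈ Icc s (s + h), -Real.log (1 + ε₀) < X t ω - X s ω := fun t ht => by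
    have := hnear.trans_le (csInf_le (hbdd (Icc_subset_Icc_right (by linarith)))
      ⟨t - s, ⟨sub_nonneg.2 ht.1, by linarith [ht.2]⟩, rfl⟩)
    simpa using this
  have hend : Real.log (1 + ε₀) ≤ X (s + h) ω - X s ω :=
    hfar.le.trans (csInf_le (hbdd (I := Ico h (T - s)) fun x hx => ⟨hh.trans hx.1, hx.2.le⟩)
      ⟨h, ⟨le_rfl, by linarith⟩, rfl⟩)
  have hδ : 0 < Real.log (1 + ε₀) := by simpa using habove s ⟨le_rfl, by linarith⟩
  obtain ⟨hlt, hle⟩ := exitTime_lt_and_le_apply (continuousOn_increment hcont hs)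
    (le_add_of_nonneg_right hh) hhT habove hend
  rw [Rseq_succ, tauSeq_succ, if_pos hlt]
  exact Real.sign_of_pos (by linarith)

end Pathwise

section Localization

variable {Ω : Type*} {m : MeasurableSpace Ω} {ℱ : Filtration ℝ m} {σ : Ω → ℝ} {A : Set Ω}

theorem isStoppingTime_piecewise_const (hA : ∀ t, MeasurableSet[ℱ t] (A ∩ {ω | σ ω ≤ t}))
    (s : ℝ) [DecidablePred (· ∈ A ∩ {ω | σ ω ≤ s})] :
    IsStoppingTime ℱ fun ω => ((A ∩ {ω | σ ω ≤ s}).piecewise σ (fun _ => s) ω : WithTop ℝ) := by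
  intro t
  simp only [WithTop.coe_le_coe]
  by_cases hst : s ≤ t
  · convert MeasurableSet.univ
    refine eq_univ_of_forall fun ω => ?_
    by_cases hω : ω ∈ A ∩ {ω | σ ω ≤ s}
    · simpa [piecewise_eq_of_mem _ _ _ hω] using hω.2.trans hst
    · simpa [piecewise_eq_of_notMem _ _ _ hω] using hst
  · convert hA t using 1
    ext ω
    by_cases hω : ω ∈ A ∩ {ω | σ ω ≤ s}
    · simp [piecewise_eq_of_mem _ _ _ hω, hω.1]
    · simp only [mem_ofPred_eq, piecewise_eq_of_notMem _ _ _ hω, hst, false_iff]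
      exact fun h => hω ⟨h.1, h.2.trans (not_le.1 hst).le⟩

theorem measurableSet_piecewise_const (hA : ∀ t, MeasurableSet[ℱ t] (A ∩ {ω | σ ω ≤ t}))
    (s : ℝ) [DecidablePred (· ∈ A ∩ {ω | σ ω ≤ s})] :
    MeasurableSet[(isStoppingTime_piecewise_const hA s).measurableSpace] (A ∩ {ω | σ ω ≤ s}) := by
  refine ⟨le_iSup (fun t => ℱ t) s _ (hA s), fun t => ?_⟩
  have hB : A ∩ {ω | σ ω ≤ s} ∩
      {ω | ((A ∩ {ω | σ ω ≤ s}).piecewise σ (fun _ => s) ω : WithTop ℝ) ≤ t} =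
      A ∩ {ω | σ ω ≤ min s t} := by
    ext ω
    constructor
    · rintro ⟨hω, hωt⟩
      rw [mem_ofPred_eq, piecewise_eq_of_mem _ _ _ hω, WithTop.coe_le_coe] at hωt
      exact ⟨hω.1, le_min hω.2 hωt⟩
    · rintro ⟨hωA, hωst⟩
      have hω : ω ∈ A ∩ {ω | σ ω ≤ s} := ⟨hωA, hωst.trans (min_le_left s t)⟩
      refine ⟨hω, ?_⟩
      rw [mem_ofPred_eq, piecewise_eq_of_mem _ _ _ hω, WithTop.coe_le_coe]
      exact hωst.trans (min_le_right s t)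
  rw [hB]
  exact ℱ.mono (min_le_right s t) _ (hA _)

theorem exists_isStoppingTime_eqOn (hA : ∀ t, MeasurableSet[ℱ t] (A ∩ {ω | σ ω ≤ t})) (s : ℝ) :
    ∃ (τ : Ω → ℝ) (hτ : IsStoppingTime ℱ fun ω => (τ ω : WithTop ℝ)),
      MeasurableSet[hτ.measurableSpace] (A ∩ {ω | σ ω ≤ s}) ∧
      EqOn τ σ (A ∩ {ω | σ ω ≤ s}) ∧ EqOn τ (fun _ => s) (A ∩ {ω | σ ω ≤ s})ᶜ := by
  classical
  exact ⟨_, isStoppingTime_piecewise_const hA s, measurableSet_piecewise_const hA s,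
    piecewise_eqOn _ _ _, piecewise_eqOn_compl _ _ _⟩

end Localization

theorem exists_measure_inter_le_pos {Ω : Type*} {m : MeasurableSpace Ω} {μ : Measure Ω}
    {σ : Ω → ℝ} {A : Set Ω} {a T : ℝ} (haT : a < T) (hA : A ⊆ {ω | σ ω < T}) (hμA : μ A ≠ 0) :
    ∃ s ∈ Ioo a T, 0 < μ (A ∩ {ω | σ ω ≤ s}) := by
  obtain ⟨u, -, hu, hlim⟩ := exists_seq_strictMono_tendsto' haT
  have hcover : A = ⋃ k, A ∩ {ω | σ ω ≤ u k} := by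
    refine (iUnion_subset fun _ => inter_subset_left).antisymm' fun ω hω => ?_
    obtain ⟨k, hk⟩ := (hlim.eventually (lt_mem_nhds (hA hω))).exists
    exact mem_iUnion.2 ⟨k, hω, hk.le⟩
  obtain ⟨k, hk⟩ := exists_measure_pos_of_not_measure_iUnion_null (hcover ▸ hμA)
  exact ⟨u k, hu k, hk⟩

/-- The paper's `n` is `n + 1` here, so `tauSeq X T ε₀ n = τ_{n−1}`; `A ∈ ℱ_{τ_{n−1}}` is
expressed by the defining property of that σ-algebra. -/
theorem positivity_of_Rn_events_general {Ω : Type*} {m : MeasurableSpace Ω} (P : Measure Ω)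
    [IsProbabilityMeasure P] (ℱ : Filtration ℝ m) (T : ℝ) (hT : 0 < T)
    (X : ℝ → Ω → ℝ)
    (hcont : ∀ ω, ContinuousOn (fun t => X t ω) (Icc 0 T))
    (ε₀ : ℝ)
    (hcond : ∀ h ∈ Ioo (0:ℝ) T, ∀ (τ : Ω → ℝ) (hτ : IsStoppingTime ℱ (fun ω => (τ ω : WithTop ℝ))),
      (∀ ω, τ ω ∈ Ico (0:ℝ) (T - h)) →
      ∀ j ∈ ({-1, 0, 1} : Set ℤ),
      ∀ᵐ ω ∂P, 0 < (P[(FXev X T τ h (Real.log (1+ε₀)) (Real.log (1+ε₀)) j).indicator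
          (fun _ => (1:ℝ)) | hτ.measurableSpace]) ω) :
    ∀ n : ℕ, ∀ j ∈ ({-1, 0, 1} : Set ℝ), ∀ A : Set Ω,
      (∀ t : ℝ, MeasurableSet[ℱ t] (A ∩ {ω | tauSeq X T ε₀ n ω ≤ t})) →
      A ⊆ {ω | tauSeq X T ε₀ n ω < T} → 0 < P A →
      0 < P (A ∩ {ω | Rseq X T ε₀ (n + 1) ω = j}) := by
  intro n j hj A hA hAT hPA
  obtain ⟨s, ⟨hs0, hsT⟩, hPB⟩ := exists_measure_inter_le_pos hT hAT hPA.ne'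
  set B := A ∩ {ω | tauSeq X T ε₀ n ω ≤ s}
  set h := (T - s) / 2 with h_def
  have hh : 0 < h := by linarith
  have hroom : ∀ ω ∈ B, tauSeq X T ε₀ n ω + h < T := fun ω hω => by
    linarith [show tauSeq X T ε₀ n ω ≤ s from hω.2]
  obtain ⟨τ, hτ, hBτ, hτB, hτBc⟩ := exists_isStoppingTime_eqOn hA s
  have hτmem : ∀ ω, τ ω ∈ Ico 0 (T - h) := fun ω => by
    by_cases hω : ω ∈ B
    · rw [hτB hω]
      exact ⟨tauSeq_nonneg hT.le n ω, by linarith [hroom ω hω]⟩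
    · rw [hτBc hω]
      exact ⟨hs0.le, by linarith⟩
  have hBF : ∀ j' ∈ ({-1, 0, 1} : Set ℤ),
      0 < P (B ∩ FXev X T τ h (Real.log (1 + ε₀)) (Real.log (1 + ε₀)) j') := fun j' hj' =>
    measure_inter_pos_of_condExp_indicator_pos hτ.measurableSpace_le
      (hcond h ⟨hh, by linarith⟩ τ hτ hτmem j' hj') hBτ hPB
  simp only [mem_insert_iff, mem_singleton_iff] at hj
  rcases hj with rfl | rfl | rfl
  · refine (hBF 1 (by simp)).trans_le (measure_mono fun ω ⟨hωB, hωF⟩ => ⟨hωB.1, ?_⟩)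
    exact Rseq_succ_eq_neg_one (hcont ω) hT.le (hτB hωB) hh.le (hroom ω hωB) hωF
  · refine (hBF 0 (by simp)).trans_le (measure_mono fun ω ⟨hωB, hωF⟩ => ⟨hωB.1, ?_⟩)
    exact Rseq_succ_eq_zero (hcont ω) hT.le (hτB hωB) hωF
  · refine (hBF (-1) (by simp)).trans_le (measure_mono fun ω ⟨hωB, hωF⟩ => ⟨hωB.1, ?_⟩)
    exact Rseq_succ_eq_one (hcont ω) hT.le (hτB hωB) hh.le (hroom ω hωB) hωF

/-- Second step of the proof of Theorem 2.2 of the paper: under the conditional positivity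
assumption, for every `n ≥ 1` (here written with `n + 1` playing the role of `n`, so that
`tauSeq X T ε₀ n = τ_{n−1}`), every `j ∈ {−1,0,1}` and every `A ∈ ℱ_{τ_{n−1}}` (membership in
the σ-algebra of the stopping time `τ_{n−1}` being expressed by its defining property) with
`A ⊆ {τ_{n−1} < T}` and `P(A) > 0`, one has `P(A ∩ {R_n = j}) > 0`. -/
theorem positivity_of_Rn_events {Ω : Type*} {m : MeasurableSpace Ω} (P : Measure Ω)
    [IsProbabilityMeasure P] (ℱ : Filtration ℝ m) (T : ℝ) (hT : 0 < T)
    (X : ℝ → Ω → ℝ) (hadp : Adapted ℱ X)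
    (hcont : ∀ ω, ContinuousOn (fun t => X t ω) (Icc 0 T))
    (htriv : ∀ s : Set Ω, MeasurableSet[ℱ 0] s → P s = 0 ∨ P s = 1)
    (ε₀ : ℝ) (hε₀ : 0 < ε₀)
    (hcond : ∀ h ∈ Ioo (0:ℝ) T, ∀ (τ : Ω → ℝ) (hτ : IsStoppingTime ℱ (fun ω => (τ ω : WithTop ℝ))),
      (∀ ω, τ ω ∈ Ico (0:ℝ) (T - h)) →
      ∀ j ∈ ({-1, 0, 1} : Set ℤ),
      ∀ᵐ ω ∂P, 0 < (P[(FXev X T τ h (Real.log (1+ε₀)) (Real.log (1+ε₀)) j).indicator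
          (fun _ => (1:ℝ)) | hτ.measurableSpace]) ω) :
    ∀ n : ℕ, ∀ j ∈ ({-1, 0, 1} : Set ℝ), ∀ A : Set Ω,
      (∀ t : ℝ, MeasurableSet[ℱ t] (A ∩ {ω | tauSeq X T ε₀ n ω ≤ t})) →
      A ⊆ {ω | tauSeq X T ε₀ n ω < T} → 0 < P A →
      0 < P (A ∩ {ω | Rseq X T ε₀ (n + 1) ω = j}) :=
  positivity_of_Rn_events_general P ℱ T hT X hcont ε₀ hcond

end
end

section
/- Let ε₀ > 0, let τ₀ = 0, τ_{n+1} = inf{ t ≥ τ_n : X_t − X_{τ_n} ∉ (−log(1+ε₀), log(1+ε₀)) } ∧ T, R_n = sign(X_{τ_n} − X_{τ_{n−1}}) if τ_n < T and R_n = 0 if τ_n = T, and Z_n = Y_0 (1+ε₀)^{R_1 + ⋯ + R_n} with Y_t = exp(X_t). Suppose Q is a probability measure equivalent to P under which (Z_n, 𝓕_{τ_n})_{n≥0} is a uniformly integrable martingale, let Z_∞ = lim_{n→∞} Z_n, and define Z̃_t = E_Q[Z_∞ | 𝓕_t] for t ∈ [0,T]. Then (1+ε₀)^{−3} Y_t ≤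 Z̃_t ≤ (1+ε₀)³ Y_t almost surely for every t ∈ [0,T]; in particular Z̃ together with Q is an ε-consistent price system for Y with ε = (1+ε₀)³ − 1. -/
open MeasureTheory Set Filter

noncomputable section

/-- A strictly positive adapted process `Y` on `[0,T]` admits an `ε`-consistent price system
if there are a probability measure `Q` equivalent to `P` and a `Q`-martingale `Ỹ` on `[0,T]`
(with respect to the filtration `ℱ`) such that
`(1+ε)⁻¹ Y_t ≤ Ỹ_t ≤ (1+ε) Y_t` a.s. for all `t ∈ [0,T]`. -/
def AdmitsCPS {Ω : Type*} {m : MeasurableSpace Ω} (P : Measure Ω) (ℱ : Filtration ℝ m)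
    (T : ℝ) (Y : ℝ → Ω → ℝ) (ε : ℝ) : Prop :=
  ∃ (Q : Measure Ω) (Yt : ℝ → Ω → ℝ), IsProbabilityMeasure Q ∧ Q ≪ P ∧ P ≪ Q ∧
    (∀ t ∈ Icc (0:ℝ) T, StronglyMeasurable[ℱ t] (Yt t)) ∧
    (∀ t ∈ Icc (0:ℝ) T, Integrable (Yt t) Q) ∧
    (∀ s ∈ Icc (0:ℝ) T, ∀ t ∈ Icc (0:ℝ) T, s ≤ t → Q[Yt t | ℱ s] =ᵐ[Q] Yt s) ∧
    (∀ t ∈ Icc (0:ℝ) T, ∀ᵐ ω ∂P, (1+ε)⁻¹ * Y t ω ≤ Yt t ω ∧ Yt t ω ≤ (1+ε) * Y t ω)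

/-!
Between `τ_n` and `τ_{n+1}` the path `X` stays within `log (1+ε₀)` of `X_{τ_n}`, and by
continuity every `τ_{n+1} < T` is an exact exit of that band. Hence `log Z_n = X_{τ_n}` as long
as `τ_n < T`, and `Z_{n+1}` is within a factor `(1+ε₀)²` of `Y_t` whenever
`τ_n ≤ t ≤ τ_{n+1}` and `τ_n < T`. The event `A` of these three conditions lies in `ℱ_t` and
inside `{t ≤ τ_{n+1}}`, so `ℱ_t`-measurable subsets of `A` are `ℱ_{τ_{n+1}}`-measurable. As `Z` is
a uniformly integrable `(ℱ_{τ_n})`-martingale, `E_Q[Z_∞ | ℱ_{τ_{n+1}}] = Z_{n+1}`, so on `A` the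
conditional expectation `E_Q[Z_∞ | ℱ_t]` agrees with `E_Q[Z_{n+1} | ℱ_t]` and inherits the band.
Retirement of the walk makes these events cover `Ω`.
-/

lemma Real.mul_sign_eq_self_of_abs_eq {x L : ℝ} (h : |x| = L) : L * Real.sign x = x := by
  rcases lt_trichotomy x 0 with hx | rfl | hx
  · rw [Real.sign_of_neg hx, ← h, abs_of_neg hx]
    ring
  · rw [Real.sign_zero, mul_zero]
  · rw [Real.sign_of_pos hx, ← h, abs_of_pos hx, mul_one]

lemma Real.exp_mem_Icc_of_abs_sub_le {a b y : ℝ} (hy : 0 < y) {k : ℕ}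
    (h : |a - b| ≤ k * Real.log y) :
    Real.exp a ∈ Icc ((y ^ k)⁻¹ * Real.exp b) (y ^ k * Real.exp b) := by
  have hyk : y ^ k = Real.exp (k * Real.log y) := by rw [Real.exp_nat_mul, Real.exp_log hy]
  obtain ⟨h₁, h₂⟩ := abs_le.1 h
  rw [hyk, ← Real.exp_neg, ← Real.exp_add, ← Real.exp_add]
  exact ⟨Real.exp_le_exp.2 (by linarith), Real.exp_le_exp.2 (by linarith)⟩

namespace MeasureTheory

section StoppingTime

variable {Ω ι : Type*} {m₀ : MeasurableSpace Ω}

lemma IsStoppingTime.measurableSet_of_subset_le [LinearOrder ι] {ℱ : Filtration ι m₀}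
    {τ : Ω → WithTop ι} (hτ : IsStoppingTime ℱ τ) {i : ι} {s : Set Ω}
    (hs : MeasurableSet[ℱ i] s) (hsub : s ⊆ {ω | i ≤ τ ω}) :
    MeasurableSet[hτ.measurableSpace] s := by
  refine ⟨le_iSup ℱ i s hs, fun j => ?_⟩
  rcases le_or_gt i j with hij | hji
  · exact (ℱ.mono hij s hs).inter (hτ j)
  · convert @MeasurableSet.empty _ (ℱ j)
    refine eq_empty_of_forall_notMem fun ω ⟨hωs, hωj⟩ => ?_
    exact hji.not_ge (WithTop.coe_le_coe.1 (le_trans (hsub hωs) hωj))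

lemma IsStoppingTime.measurableSet_le_and_lt_and_ge [LinearOrder ι] [TopologicalSpace ι]
    [OrderTopology ι] [FirstCountableTopology ι] {ℱ : Filtration ι m₀} {σ τ : Ω → ι}
    (hσ : IsStoppingTime ℱ (fun ω => (σ ω : WithTop ι)))
    (hτ : IsStoppingTime ℱ (fun ω => (τ ω : WithTop ι))) (i j : ι) :
    MeasurableSet[ℱ i] {ω | σ ω ≤ i ∧ σ ω < j ∧ i ≤ τ ω} := by
  have h := ((hσ.measurableSet_lt' j).2 i).inter (hτ.measurableSet_ge i)
  simp only [WithTop.coe_lt_coe, WithTop.coe_le_coe] at h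
  convert h using 1
  ext ω
  simp only [mem_ofPred_eq, mem_inter_iff]
  tauto

def Filtration.ofStoppingTimes [Preorder ι] {ℱ : Filtration ι m₀} {τ : ℕ → Ω → WithTop ι}
    (hτ : ∀ n, IsStoppingTime ℱ (τ n)) (hmono : Monotone τ) : Filtration ℕ m₀ where
  seq n := (hτ n).measurableSpace
  mono' _ _ hij := (hτ _).measurableSpace_mono (hτ _) (hmono hij)
  le' n := (hτ n).measurableSpace_le

end StoppingTime

section Martingale

variable {Ω : Type*} {m₀ : MeasurableSpace Ω} {μ : Measure Ω} [IsFiniteMeasure μ]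
  {𝒢 : Filtration ℕ m₀} {f : ℕ → Ω → ℝ} {g : Ω → ℝ}

lemma Martingale.ae_eq_limitProcess_of_tendsto (hf : Martingale f 𝒢 μ)
    (hUI : UniformIntegrable f 1 μ) (hg : ∀ᵐ ω ∂μ, Tendsto (f · ω) atTop (nhds (g ω))) :
    g =ᵐ[μ] 𝒢.limitProcess f μ := by
  filter_upwards [hg, hf.submartingale.ae_tendsto_limitProcess_of_uniformIntegrable hUI]
    with ω h₁ h₂ using tendsto_nhds_unique h₁ h₂

lemma Martingale.integrable_of_tendsto (hf : Martingale f 𝒢 μ)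
    (hUI : UniformIntegrable f 1 μ) (hg : ∀ᵐ ω ∂μ, Tendsto (f · ω) atTop (nhds (g ω))) :
    Integrable g μ := by
  obtain ⟨R, hR⟩ := hUI.2.2
  exact ((hf.submartingale.memLp_limitProcess hR).integrable le_rfl).congr
    (hf.ae_eq_limitProcess_of_tendsto hUI hg).symm

lemma Martingale.condExp_ae_eq_of_tendsto (hf : Martingale f 𝒢 μ)
    (hUI : UniformIntegrable f 1 μ) (hg : ∀ᵐ ω ∂μ, Tendsto (f · ω) atTop (nhds (g ω)))
    (n : ℕ) : μ[g | 𝒢 n] =ᵐ[μ] f n :=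
  (condExp_congr_ae (hf.ae_eq_limitProcess_of_tendsto hUI hg)).trans
    (hf.ae_eq_condExp_limitProcess hUI n).symm

end Martingale

section CondExp

variable {Ω : Type*} {m 𝒢 m₀ : MeasurableSpace Ω} {μ : Measure Ω} [IsFiniteMeasure μ]
  {f g h : Ω → ℝ} {c : ℝ}

lemma ae_condExp_mem_Icc_of_ae_mem_Icc (hm : m ≤ m₀) (hc : 0 < c) (hf : Integrable f μ)
    (hg : StronglyMeasurable[m] g) (hg₀ : 0 ≤ g)
    (hfg : ∀ᵐ ω ∂μ, f ω ∈ Icc (c⁻¹ * g ω) (c * g ω)) :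
    ∀ᵐ ω ∂μ, μ[f | m] ω ∈ Icc (c⁻¹ * g ω) (c * g ω) := by
  have hgi : Integrable g μ := by
    refine Integrable.mono' (hf.norm.const_mul c) (hg.mono hm).aestronglyMeasurable ?_
    filter_upwards [hfg] with ω hω
    rw [Real.norm_eq_abs, abs_of_nonneg (hg₀ ω)]
    calc g ω = c * (c⁻¹ * g ω) := by field_simp
      _ ≤ c * ‖f ω‖ := mul_le_mul_of_nonneg_left (hω.1.trans (le_abs_self _)) hc.le
  have hlow := condExp_mono (m := m) (hgi.const_mul c⁻¹) hf (hfg.mono fun _ hω => hω.1)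
  have hup := condExp_mono (m := m) hf (hgi.const_mul c) (hfg.mono fun _ hω => hω.2)
  rw [condExp_of_stronglyMeasurable hm (hg.const_mul c⁻¹) (hgi.const_mul c⁻¹)] at hlow
  rw [condExp_of_stronglyMeasurable hm (hg.const_mul c) (hgi.const_mul c)] at hup
  filter_upwards [hlow, hup] with ω h₁ h₂ using ⟨h₁, h₂⟩

lemma ae_condExp_mem_Icc_on_of_trace (hm : m ≤ m₀) (h𝒢 : 𝒢 ≤ m₀) {A : Set Ω}
    (hAm : MeasurableSet[m] A) (hA𝒢 : ∀ B, MeasurableSet[m] B → MeasurableSet[𝒢] (B ∩ A))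
    (hf : Integrable f μ) (hfh : μ[f | 𝒢] =ᵐ[μ] h) (hc : 0 < c)
    (hg : StronglyMeasurable[m] g) (hg₀ : 0 ≤ g)
    (hhg : ∀ᵐ ω ∂μ, ω ∈ A → h ω ∈ Icc (c⁻¹ * g ω) (c * g ω)) :
    ∀ᵐ ω ∂μ, ω ∈ A → μ[f | m] ω ∈ Icc (c⁻¹ * g ω) (c * g ω) := by
  have hA : MeasurableSet A := hm A hAm
  have hhi : Integrable h μ := integrable_condExp.congr hfh
  have hswap : μ[A.indicator h | m] =ᵐ[μ] μ[A.indicator f | m] := by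
    refine ae_eq_condExp_of_forall_setIntegral_eq hm (hf.indicator hA)
      (fun _ _ _ => integrable_condExp.integrableOn) (fun B hB _ => ?_)
      stronglyMeasurable_condExp.aestronglyMeasurable
    have hBA : MeasurableSet[𝒢] (B ∩ A) := hA𝒢 B hB
    rw [setIntegral_condExp hm (hhi.indicator hA) hB, setIntegral_indicator hA,
      setIntegral_indicator hA, ← setIntegral_condExp h𝒢 hf hBA]
    exact setIntegral_congr_ae (h𝒢 _ hBA) (hfh.mono fun _ hω _ => hω.symm)
  have hband := ae_condExp_mem_Icc_of_ae_mem_Icc hm hc (hhi.indicator hA) (hg.indicator hAm)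
    (indicator_nonneg fun ω _ => hg₀ ω) (hhg.mono fun ω hω => by
      by_cases hωA : ω ∈ A
      · simpa only [indicator_of_mem hωA] using hω hωA
      · simp only [indicator_of_notMem hωA, mul_zero, mem_Icc, le_refl, and_self])
  filter_upwards [hband, hswap, condExp_indicator hf hAm] with ω hω hsw hind hωA
  rw [hsw, hind] at hω
  simpa only [indicator_of_mem hωA] using hω

end CondExp

end MeasureTheory

lemma admitsCPS_of_ae_condExp_mem_Icc {Ω : Type*} {m : MeasurableSpace Ω} {P Q : Measure Ω}
    [IsProbabilityMeasure Q] (hQP : Q ≪ P) (hPQ : P ≪ Q) {ℱ : Filtration ℝ m} {T : ℝ}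
    {Y : ℝ → Ω → ℝ} {f : Ω → ℝ} {c : ℝ}
    (h : ∀ t ∈ Icc (0:ℝ) T, ∀ᵐ ω ∂P, (Q[f | ℱ t]) ω ∈ Icc (c⁻¹ * Y t ω) (c * Y t ω)) :
    AdmitsCPS P ℱ T Y (c - 1) := by
  refine ⟨Q, fun t => Q[f | ℱ t], ‹_›, hQP, hPQ, fun _ _ => stronglyMeasurable_condExp,
    fun _ _ => integrable_condExp, fun s _ t _ hst => condExp_condExp_of_le (ℱ.mono hst) (ℱ.le t),
    fun t ht => ?_⟩
  simpa only [add_sub_cancel, mem_Icc] using h t ht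

section RetiredWalk

variable {Ω : Type*} {X : ℝ → Ω → ℝ} {T ε₀ : ℝ} {ω : Ω} {n : ℕ} {t : ℝ}

def exitSet (X : ℝ → Ω → ℝ) (T ε₀ : ℝ) (n : ℕ) (ω : Ω) : Set ℝ :=
  {t | tauSeq X T ε₀ n ω ≤ t ∧
    X t ω - X (tauSeq X T ε₀ n ω) ω ∉ Ioo (-Real.log (1 + ε₀)) (Real.log (1 + ε₀))}

lemma tauSeq_succ_eq_sInf : tauSeq X T ε₀ (n + 1) ω = sInf (exitSet X T ε₀ n ω ∪ {T}) := rfl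

lemma bddBelow_exitSet_union : BddBelow (exitSet X T ε₀ n ω ∪ {T}) := by
  refine ⟨min (tauSeq X T ε₀ n ω) T, ?_⟩
  rintro t (ht | rfl)
  exacts [min_le_of_left_le ht.1, min_le_right _ _]

lemma tauSeq_succ_le : tauSeq X T ε₀ (n + 1) ω ≤ T := by
  rw [tauSeq_succ_eq_sInf]
  exact csInf_le bddBelow_exitSet_union (Or.inr rfl)

lemma tauSeq_le_succ (hn : tauSeq X T ε₀ n ω ≤ T) :
    tauSeq X T ε₀ n ω ≤ tauSeq X T ε₀ (n + 1) ω := by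
  rw [tauSeq_succ_eq_sInf]
  refine le_csInf ⟨T, Or.inr rfl⟩ ?_
  rintro t (ht | rfl)
  exacts [ht.1, hn]

lemma tauSeq_mem_Icc (hT : 0 ≤ T) : ∀ n, tauSeq X T ε₀ n ω ∈ Icc 0 T
  | 0 => ⟨le_rfl, hT⟩
  | n + 1 =>
    have ih := tauSeq_mem_Icc hT n
    ⟨ih.1.trans (tauSeq_le_succ ih.2), tauSeq_succ_le⟩

lemma tauSeq_monotone (hT : 0 ≤ T) : Monotone (tauSeq X T ε₀ · ω) :=
  monotone_nat_of_le_succ fun n => tauSeq_le_succ (tauSeq_mem_Icc hT n).2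

lemma abs_sub_lt_of_lt_tauSeq_succ (h₁ : tauSeq X T ε₀ n ω ≤ t)
    (h₂ : t < tauSeq X T ε₀ (n + 1) ω) :
    |X t ω - X (tauSeq X T ε₀ n ω) ω| < Real.log (1 + ε₀) := by
  by_contra h
  have ht : t ∈ exitSet X T ε₀ n ω := ⟨h₁, fun ht => h (abs_lt.2 ht)⟩
  rw [tauSeq_succ_eq_sInf] at h₂
  exact h₂.not_ge (csInf_le bddBelow_exitSet_union (Or.inl ht))

lemma abs_sub_le_of_mem_Icc_tauSeq (hT : 0 ≤ T) (hε₀ : 0 ≤ ε₀)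
    (hcont : ContinuousOn (X · ω) (Icc 0 T))
    (ht : t ∈ Icc (tauSeq X T ε₀ n ω) (tauSeq X T ε₀ (n + 1) ω)) :
    |X t ω - X (tauSeq X T ε₀ n ω) ω| ≤ Real.log (1 + ε₀) := by
  set a := tauSeq X T ε₀ n ω
  set b := tauSeq X T ε₀ (n + 1) ω
  rcases eq_or_lt_of_le (ht.1.trans ht.2) with hab | hab
  · rw [le_antisymm (ht.2.trans hab.ge) ht.1, sub_self, abs_zero]
    exact Real.log_nonneg (by linarith)
  -- the band condition is closed and holds on `[a, b)`, hence on its closure `[a, b]`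
  have hK : IsClosed (Icc a b ∩ (fun s => X s ω - X a ω) ⁻¹'
      Icc (-Real.log (1 + ε₀)) (Real.log (1 + ε₀))) :=
    ((hcont.mono (Icc_subset_Icc (tauSeq_mem_Icc hT n).1 tauSeq_succ_le)).sub
      continuousOn_const).preimage_isClosed_of_isClosed isClosed_Icc isClosed_Icc
  have hIco : Ico a b ⊆ Icc a b ∩ (fun s => X s ω - X a ω) ⁻¹'
      Icc (-Real.log (1 + ε₀)) (Real.log (1 + ε₀)) := fun s hs =>
    ⟨Ico_subset_Icc_self hs, abs_le.1 (abs_sub_lt_of_lt_tauSeq_succ hs.1 hs.2).le⟩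
  rw [← closure_Ico hab.ne] at ht
  exact abs_le.2 (hK.closure_subset_iff.2 hIco ht).2

lemma le_abs_sub_of_tauSeq_succ_lt (hT : 0 ≤ T) (hcont : ContinuousOn (X · ω) (Icc 0 T))
    (h : tauSeq X T ε₀ (n + 1) ω < T) :
    Real.log (1 + ε₀) ≤ |X (tauSeq X T ε₀ (n + 1) ω) ω - X (tauSeq X T ε₀ n ω) ω| := by
  set a := tauSeq X T ε₀ n ω
  rw [tauSeq_succ_eq_sInf] at h ⊢
  -- `τ_{n+1} < T` lies in the closure of the exit set, which is closed inside `[a, T]`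
  have hK : IsClosed (Icc a T ∩ (fun s => X s ω - X a ω) ⁻¹'
      (Ioo (-Real.log (1 + ε₀)) (Real.log (1 + ε₀)))ᶜ) :=
    ((hcont.mono (Icc_subset_Icc (tauSeq_mem_Icc hT n).1 le_rfl)).sub
      continuousOn_const).preimage_isClosed_of_isClosed isClosed_Icc isOpen_Ioo.isClosed_compl
  have hsub : Iio T ∩ (exitSet X T ε₀ n ω ∪ {T}) ⊆ Icc a T ∩ (fun s => X s ω - X a ω) ⁻¹'
      (Ioo (-Real.log (1 + ε₀)) (Real.log (1 + ε₀)))ᶜ := by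
    rintro s ⟨hsT, hs | rfl⟩
    · exact ⟨⟨hs.1, hsT.le⟩, hs.2⟩
    · exact (lt_irrefl s (mem_Iio.1 hsT)).elim
  have hmem := hK.closure_subset_iff.2 hsub (isOpen_Iio.inter_closure
    ⟨h, csInf_mem_closure ⟨T, Or.inr rfl⟩ bddBelow_exitSet_union⟩)
  exact not_lt.1 fun hlt => hmem.2 (abs_lt.1 hlt)

def logZseq (X : ℝ → Ω → ℝ) (T ε₀ : ℝ) (n : ℕ) (ω : Ω) : ℝ :=
  X 0 ω + Real.log (1 + ε₀) * ∑ i ∈ Finset.range n, Rseq X T ε₀ (i + 1) ω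

lemma Zseq_eq_exp_logZseq (hε₀ : -1 < ε₀) :
    Zseq X T ε₀ n ω = Real.exp (logZseq X T ε₀ n ω) := by
  rw [Zseq, logZseq, Real.rpow_def_of_pos (by linarith), Real.exp_add]

lemma logZseq_succ : logZseq X T ε₀ (n + 1) ω =
    logZseq X T ε₀ n ω + Real.log (1 + ε₀) * Rseq X T ε₀ (n + 1) ω := by
  simp only [logZseq, Finset.sum_range_succ]
  ring

lemma Rseq_succ_of_lt (h : tauSeq X T ε₀ (n + 1) ω < T) :
    Rseq X T ε₀ (n + 1) ω =
      Real.sign (X (tauSeq X T ε₀ (n + 1) ω) ω - X (tauSeq X T ε₀ n ω) ω) :=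
  if_pos h

lemma abs_Rseq_le_one : ∀ n, |Rseq X T ε₀ n ω| ≤ 1
  | 0 => by simp [Rseq]
  | n + 1 => by
    simp only [Rseq]
    split_ifs
    · rcases Real.sign_apply_eq (X (tauSeq X T ε₀ (n + 1) ω) ω - X (tauSeq X T ε₀ n ω) ω)
        with h | h | h <;> simp [h]
    · simp

lemma logZseq_eq_of_tauSeq_lt (hT : 0 ≤ T) (hε₀ : 0 ≤ ε₀)
    (hcont : ContinuousOn (X · ω) (Icc 0 T)) :
    ∀ {n}, tauSeq X T ε₀ n ω < T → logZseq X T ε₀ n ω = X (tauSeq X T ε₀ n ω) ω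
  | 0, _ => by simp [logZseq, tauSeq]
  | n + 1, h => by
    have hn : tauSeq X T ε₀ n ω < T := (tauSeq_le_succ (tauSeq_mem_Icc hT n).2).trans_lt h
    have hexit : |X (tauSeq X T ε₀ (n + 1) ω) ω - X (tauSeq X T ε₀ n ω) ω| =
        Real.log (1 + ε₀) :=
      le_antisymm (abs_sub_le_of_mem_Icc_tauSeq hT hε₀ hcont
        ⟨tauSeq_le_succ (tauSeq_mem_Icc hT n).2, le_rfl⟩) (le_abs_sub_of_tauSeq_succ_lt hT hcont h)
    rw [logZseq_succ, logZseq_eq_of_tauSeq_lt hT hε₀ hcont hn, Rseq_succ_of_lt h,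
      Real.mul_sign_eq_self_of_abs_eq hexit]
    ring

lemma abs_logZseq_succ_sub_le (hT : 0 ≤ T) (hε₀ : 0 ≤ ε₀)
    (hcont : ContinuousOn (X · ω) (Icc 0 T)) (h₁ : tauSeq X T ε₀ n ω ≤ t)
    (h₂ : t ≤ tauSeq X T ε₀ (n + 1) ω) (hn : tauSeq X T ε₀ n ω < T) :
    |logZseq X T ε₀ (n + 1) ω - X t ω| ≤ 2 * Real.log (1 + ε₀) := by
  have hL : 0 ≤ Real.log (1 + ε₀) := Real.log_nonneg (by linarith)
  have hstep : |Real.log (1 + ε₀) * Rseq X T ε₀ (n + 1) ω| ≤ Real.log (1 + ε₀) := by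
    rw [abs_mul, abs_of_nonneg hL]
    exact mul_le_of_le_one_right hL (abs_Rseq_le_one _)
  have hband := abs_sub_le_of_mem_Icc_tauSeq hT hε₀ hcont ⟨h₁, h₂⟩
  rw [logZseq_succ, logZseq_eq_of_tauSeq_lt hT hε₀ hcont hn]
  calc _ = |Real.log (1 + ε₀) * Rseq X T ε₀ (n + 1) ω - (X t ω - X (tauSeq X T ε₀ n ω) ω)| := by
        ring_nf
    _ ≤ _ := (abs_sub _ _).trans (by linarith)

lemma Zseq_succ_mem_Icc (hT : 0 ≤ T) (hε₀ : 0 ≤ ε₀) (hcont : ContinuousOn (X · ω) (Icc 0 T))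
    (h₁ : tauSeq X T ε₀ n ω ≤ t) (h₂ : t ≤ tauSeq X T ε₀ (n + 1) ω)
    (hn : tauSeq X T ε₀ n ω < T) :
    Zseq X T ε₀ (n + 1) ω ∈
      Icc (((1 + ε₀) ^ 3)⁻¹ * Real.exp (X t ω)) ((1 + ε₀) ^ 3 * Real.exp (X t ω)) := by
  rw [Zseq_eq_exp_logZseq (by linarith)]
  refine Real.exp_mem_Icc_of_abs_sub_le (by linarith) ?_
  have hL : 0 ≤ Real.log (1 + ε₀) := Real.log_nonneg (by linarith)
  have := abs_logZseq_succ_sub_le hT hε₀ hcont h₁ h₂ hn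
  push_cast
  linarith

lemma exists_tauSeq_le_and_lt_and_ge (hT : 0 < T) (hret : ∃ N, tauSeq X T ε₀ N ω = T)
    (ht : t ∈ Icc 0 T) :
    ∃ n, tauSeq X T ε₀ n ω ≤ t ∧ tauSeq X T ε₀ n ω < T ∧ t ≤ tauSeq X T ε₀ (n + 1) ω := by
  by_contra! hno
  have hall : ∀ n, tauSeq X T ε₀ n ω ≤ t ∧ tauSeq X T ε₀ n ω < T := by
    intro n
    induction n with
    | zero => exact ⟨ht.1, hT⟩
    | succ n ih =>
      have hlt := hno n ih.1 ih.2
      exact ⟨hlt.le, hlt.trans_le ht.2⟩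
  obtain ⟨N, hN⟩ := hret
  exact (hall N).2.ne hN

end RetiredWalk
theorem CPS_from_retired_walk_general {Ω : Type*} {m : MeasurableSpace Ω} (P : Measure Ω)
    (ℱ : Filtration ℝ m) (T : ℝ) (hT : 0 < T)
    (X : ℝ → Ω → ℝ) (hadp : Adapted ℱ X)
    (hcont : ∀ ω, ContinuousOn (fun t => X t ω) (Icc 0 T))
    (ε₀ : ℝ) (hε₀ : 0 < ε₀)
    (hστ : ∀ n : ℕ, IsStoppingTime ℱ (fun ω => ((tauSeq X T ε₀ n ω : ℝ) : WithTop ℝ)))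
    (hretire : ∀ᵐ ω ∂P, ∃ n : ℕ, tauSeq X T ε₀ n ω = T)
    (Q : Measure Ω) [IsProbabilityMeasure Q] (hQP : Q ≪ P) (hPQ : P ≪ Q)
    (hZmeas : ∀ n : ℕ, StronglyMeasurable[(hστ n).measurableSpace] (Zseq X T ε₀ n))
    (hZint : ∀ n : ℕ, Integrable (Zseq X T ε₀ n) Q)
    (hZmart : ∀ n : ℕ,
      Q[Zseq X T ε₀ (n + 1) | (hστ n).measurableSpace] =ᵐ[Q] Zseq X T ε₀ n)
    (hUI : UniformIntegrable (Zseq X T ε₀) 1 Q)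
    (Zinf : Ω → ℝ)
    (hZinf : ∀ᵐ ω ∂Q, Tendsto (fun n => Zseq X T ε₀ n ω) atTop (nhds (Zinf ω))) :
    (∀ t ∈ Icc (0:ℝ) T, ∀ᵐ ω ∂P,
      ((1 + ε₀) ^ 3)⁻¹ * Real.exp (X t ω) ≤ (Q[Zinf | ℱ t]) ω ∧
      (Q[Zinf | ℱ t]) ω ≤ (1 + ε₀) ^ 3 * Real.exp (X t ω)) ∧
    AdmitsCPS P ℱ T (fun t ω => Real.exp (X t ω)) ((1 + ε₀) ^ 3 - 1) := by
  set 𝒢 := Filtration.ofStoppingTimes hστ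
    fun _ _ hij _ => WithTop.coe_le_coe.2 (tauSeq_monotone hT.le hij)
  have hmart : Martingale (Zseq X T ε₀) 𝒢 Q :=
    martingale_nat hZmeas hZint fun n => (hZmart n).symm
  have hZinf_int : Integrable Zinf Q := hmart.integrable_of_tendsto hUI hZinf
  have hband : ∀ t ∈ Icc (0:ℝ) T, ∀ᵐ ω ∂P, (Q[Zinf | ℱ t]) ω ∈
      Icc (((1 + ε₀) ^ 3)⁻¹ * Real.exp (X t ω)) ((1 + ε₀) ^ 3 * Real.exp (X t ω)) := by
    intro t ht
    have hlocal : ∀ n, ∀ᵐ ω ∂Q,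
        ω ∈ {ω | tauSeq X T ε₀ n ω ≤ t ∧ tauSeq X T ε₀ n ω < T ∧ t ≤ tauSeq X T ε₀ (n + 1) ω} →
        (Q[Zinf | ℱ t]) ω ∈
          Icc (((1 + ε₀) ^ 3)⁻¹ * Real.exp (X t ω)) ((1 + ε₀) ^ 3 * Real.exp (X t ω)) := by
      intro n
      have hA := (hστ n).measurableSet_le_and_lt_and_ge (hστ (n + 1)) t T
      refine ae_condExp_mem_Icc_on_of_trace (ℱ.le t) (𝒢.le (n + 1)) hA
        (fun B hB => (hστ (n + 1)).measurableSet_of_subset_le (hB.inter hA)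
          fun ω hω => WithTop.coe_le_coe.2 hω.2.2.2)
        hZinf_int (hmart.condExp_ae_eq_of_tendsto hUI hZinf (n + 1)) (by positivity)
        (Real.measurable_exp.comp (hadp t)).stronglyMeasurable (fun ω => (Real.exp_pos _).le)
        (ae_of_all _ fun ω hω => Zseq_succ_mem_Icc hT.le hε₀.le (hcont ω) hω.1 hω.2.2 hω.2.1)
    filter_upwards [hPQ.ae_le (ae_all_iff.2 hlocal), hretire] with ω hω hret
    obtain ⟨n, hn⟩ := exists_tauSeq_le_and_lt_and_ge hT hret ht
    exact hω n hn
  exact ⟨hband, admitsCPS_of_ae_condExp_mem_Icc hQP hPQ hband⟩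

/-- Third step of the proof of Theorem 2.2 of the paper: if `Q ∼ P` makes
`(Z_n, ℱ_{τ_n})` a uniformly integrable martingale, `Z_∞ = lim_n Z_n`, and
`Z̃_t = E_Q[Z_∞ | ℱ_t]`, then `(1+ε₀)⁻³ Y_t ≤ Z̃_t ≤ (1+ε₀)³ Y_t` a.s. for all `t ∈ [0,T]`,
where `Y_t = exp(X_t)`; in particular `Y` admits an `ε`-CPS with `ε = (1+ε₀)³ − 1`. -/
theorem CPS_from_retired_walk {Ω : Type*} {m : MeasurableSpace Ω} (P : Measure Ω)
    [IsProbabilityMeasure P] (ℱ : Filtration ℝ m) (T : ℝ) (hT : 0 < T)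
    (X : ℝ → Ω → ℝ) (hadp : Adapted ℱ X)
    (hcont : ∀ ω, ContinuousOn (fun t => X t ω) (Icc 0 T))
    (htriv : ∀ s : Set Ω, MeasurableSet[ℱ 0] s → P s = 0 ∨ P s = 1)
    (ε₀ : ℝ) (hε₀ : 0 < ε₀)
    (hστ : ∀ n : ℕ, IsStoppingTime ℱ (fun ω => ((tauSeq X T ε₀ n ω : ℝ) : WithTop ℝ)))
    (hretire : ∀ᵐ ω ∂P, ∃ n : ℕ, tauSeq X T ε₀ n ω = T)
    (Q : Measure Ω) [IsProbabilityMeasure Q] (hQP : Q ≪ P) (hPQ : P ≪ Q)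
    (hZmeas : ∀ n : ℕ, StronglyMeasurable[(hστ n).measurableSpace] (Zseq X T ε₀ n))
    (hZint : ∀ n : ℕ, Integrable (Zseq X T ε₀ n) Q)
    (hZmart : ∀ n : ℕ,
      Q[Zseq X T ε₀ (n + 1) | (hστ n).measurableSpace] =ᵐ[Q] Zseq X T ε₀ n)
    (hUI : UniformIntegrable (Zseq X T ε₀) 1 Q)
    (Zinf : Ω → ℝ)
    (hZinf : ∀ᵐ ω ∂Q, Tendsto (fun n => Zseq X T ε₀ n ω) atTop (nhds (Zinf ω))) :
    (∀ t ∈ Icc (0:ℝ) T, ∀ᵐ ω ∂P,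
      ((1 + ε₀) ^ 3)⁻¹ * Real.exp (X t ω) ≤ (Q[Zinf | ℱ t]) ω ∧
      (Q[Zinf | ℱ t]) ω ≤ (1 + ε₀) ^ 3 * Real.exp (X t ω)) ∧
    AdmitsCPS P ℱ T (fun t ω => Real.exp (X t ω)) ((1 + ε₀) ^ 3 - 1) :=
  CPS_from_retired_walk_general P ℱ T hT X hadp hcont ε₀ hε₀ hστ hretire Q hQP hPQ hZmeas hZint
    hZmart hUI Zinf hZinf

end
end

section
/- Suppose X is adapted to a sub-filtration 𝔾 = (𝓖_t)_{t∈[0,T]} of 𝔽 = (𝓕_t)_{t∈[0,T]}, and suppose that for some ε₀ > 0, for every h ∈ (0,T) and every 𝔽-stopping time τ taking values in [0, T−h), P(F_X^j(τ, h, log(1+ε₀), log(1+ε₀)) | 𝓕_τ) > 0 almost surely for each j ∈ {−1, 0, 1}. Then the same condition holds with respect to the smaller filtration 𝔾: for every h ∈ (0,T) and every 𝔾-stopping time τ taking values in [0, T−h), P(F_X^j(τ, h, log(1+ε₀), log(1+ε₀)) | 𝓖_τ) > 0 almost surely for each j ∈ {−1, 0, 1}. -/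
open MeasureTheory Set Filter

noncomputable section

/-! The conditioning σ-algebra only shrinks when passing from `𝔽` to `𝔾`, and a.s. positivity of
a conditional expectation survives further conditioning onto a smaller σ-algebra: on the set
where the coarser conditional expectation is `≤ 0` the integral of the finer one is `≤ 0`, so
that set is null. -/

namespace MeasureTheory

section Positivity

variable {Ω : Type*} {m m₀ : MeasurableSpace Ω} {μ : Measure Ω} {f : Ω → ℝ}

theorem ae_pos_condExp (hm : m ≤ m₀) [SigmaFinite (μ.trim hm)] (hf : Integrable f μ)
    (hpos : ∀ᵐ ω ∂μ, 0 < f ω) : ∀ᵐ ω ∂μ, 0 < μ[f | m] ω := by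
  set A := {ω | μ[f | m] ω ≤ 0}
  have hA : MeasurableSet[m] A := (stronglyMeasurable_condExp (m := m) (μ := μ) (f := f)).measurable measurableSet_Iic
  have hA_null : μ A = 0 := by
    by_contra hA_pos
    have hsupp : μ (Function.support f ∩ A) = μ A := by
      rw [inter_comm]
      refine measure_inter_conull (measure_mono_null (fun ω hω => ?_) (ae_iff.1 hpos))
      simp_all
    have hint_pos : 0 < ∫ ω in A, f ω ∂μ := by
      refine (setIntegral_pos_iff_support_of_nonneg_ae
        (ae_restrict_of_ae (hpos.mono fun _ h => h.le)) hf.integrableOn).2 ?_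
      rw [hsupp]
      exact pos_iff_ne_zero.2 hA_pos
    have hint_nonpos : ∫ ω in A, f ω ∂μ ≤ 0 := by
      rw [← setIntegral_condExp hm hf hA]
      exact setIntegral_nonpos (hm _ hA) fun _ h => h
    linarith
  simpa [ae_iff, not_lt] using hA_null

theorem ae_pos_condExp_of_le {m' : MeasurableSpace Ω} (hm'm : m' ≤ m) (hm : m ≤ m₀)
    [SigmaFinite (μ.trim hm)] [SigmaFinite (μ.trim (hm'm.trans hm))]
    (hpos : ∀ᵐ ω ∂μ, 0 < μ[f | m] ω) : ∀ᵐ ω ∂μ, 0 < μ[f | m'] ω := by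
  filter_upwards [condExp_condExp_of_le (f := f) (μ := μ) hm'm hm,
    ae_pos_condExp (hm'm.trans hm) integrable_condExp hpos] with ω htower hω
  rwa [← htower]

end Positivity

namespace IsStoppingTime

variable {Ω ι : Type*} {m : MeasurableSpace Ω} [Preorder ι] {f g : Filtration ι m}
  {τ : Ω → WithTop ι}

theorem of_filtration_le (hτ : IsStoppingTime f τ) (hfg : f ≤ g) : IsStoppingTime g τ :=
  fun i => hfg i _ (hτ i)

theorem measurableSpace_le_of_filtration_le (hτ : IsStoppingTime f τ) (hfg : f ≤ g) :
    hτ.measurableSpace ≤ (hτ.of_filtration_le hfg).measurableSpace :=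
  fun _ hs => ⟨iSup_mono hfg _ hs.1, fun i => hfg i _ (hs.2 i)⟩

end IsStoppingTime

end MeasureTheory

theorem condition_stable_under_smaller_filtration_general {Ω : Type*} {m : MeasurableSpace Ω}
    (P : Measure Ω) [IsProbabilityMeasure P]
    (ℱ 𝒢 : Filtration ℝ m) (hsub : ∀ t : ℝ, 𝒢 t ≤ ℱ t)
    (T : ℝ)
    (X : ℝ → Ω → ℝ)
    (ε₀ : ℝ)
    (hcond : ∀ h ∈ Ioo (0:ℝ) T, ∀ (τ : Ω → ℝ) (hτ : IsStoppingTime ℱ (fun ω => (τ ω : WithTop ℝ))),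
      (∀ ω, τ ω ∈ Ico (0:ℝ) (T - h)) →
      ∀ j ∈ ({-1, 0, 1} : Set ℤ),
      ∀ᵐ ω ∂P, 0 < (P[(FXev X T τ h (Real.log (1+ε₀)) (Real.log (1+ε₀)) j).indicator
          (fun _ => (1:ℝ)) | hτ.measurableSpace]) ω) :
    ∀ h ∈ Ioo (0:ℝ) T, ∀ (τ : Ω → ℝ) (hτ : IsStoppingTime 𝒢 (fun ω => (τ ω : WithTop ℝ))),
      (∀ ω, τ ω ∈ Ico (0:ℝ) (T - h)) →
      ∀ j ∈ ({-1, 0, 1} : Set ℤ),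
      ∀ᵐ ω ∂P, 0 < (P[(FXev X T τ h (Real.log (1+ε₀)) (Real.log (1+ε₀)) j).indicator
          (fun _ => (1:ℝ)) | hτ.measurableSpace]) ω := by
  intro h hh τ hτ hτ_range j hj
  have hτℱ := hτ.of_filtration_le hsub
  exact ae_pos_condExp_of_le (hτ.measurableSpace_le_of_filtration_le hsub)
    hτℱ.measurableSpace_le (hcond h hh τ hτℱ hτ_range j hj)

/-- Remark 2.3 of the paper: if `X` is adapted to a sub-filtration `𝔾` of `𝔽` and the
conditional positivity condition holds with respect to `𝔽`-stopping times and `ℱ_τ`,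
then it also holds with respect to `𝔾`-stopping times and `𝒢_τ`. -/
theorem condition_stable_under_smaller_filtration {Ω : Type*} {m : MeasurableSpace Ω}
    (P : Measure Ω) [IsProbabilityMeasure P]
    (ℱ 𝒢 : Filtration ℝ m) (hsub : ∀ t : ℝ, 𝒢 t ≤ ℱ t)
    (T : ℝ) (hT : 0 < T)
    (X : ℝ → Ω → ℝ) (hadp : Adapted 𝒢 X)
    (hcont : ∀ ω, ContinuousOn (fun t => X t ω) (Icc 0 T))
    (htriv : ∀ s : Set Ω, MeasurableSet[ℱ 0] s → P s = 0 ∨ P s = 1)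
    (ε₀ : ℝ) (hε₀ : 0 < ε₀)
    (hcond : ∀ h ∈ Ioo (0:ℝ) T, ∀ (τ : Ω → ℝ) (hτ : IsStoppingTime ℱ (fun ω => (τ ω : WithTop ℝ))),
      (∀ ω, τ ω ∈ Ico (0:ℝ) (T - h)) →
      ∀ j ∈ ({-1, 0, 1} : Set ℤ),
      ∀ᵐ ω ∂P, 0 < (P[(FXev X T τ h (Real.log (1+ε₀)) (Real.log (1+ε₀)) j).indicator
          (fun _ => (1:ℝ)) | hτ.measurableSpace]) ω) :
    ∀ h ∈ Ioo (0:ℝ) T, ∀ (τ : Ω → ℝ) (hτ : IsStoppingTime 𝒢 (fun ω => (τ ω : WithTop ℝ))),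
      (∀ ω, τ ω ∈ Ico (0:ℝ) (T - h)) →
      ∀ j ∈ ({-1, 0, 1} : Set ℤ),
      ∀ᵐ ω ∂P, 0 < (P[(FXev X T τ h (Real.log (1+ε₀)) (Real.log (1+ε₀)) j).indicator
          (fun _ => (1:ℝ)) | hτ.measurableSpace]) ω :=
  condition_stable_under_smaller_filtration_general P ℱ 𝒢 hsub T X ε₀ hcond

end
end

section
/- Assume X satisfies condition (A). Let δ₀ > 0 and let f : ℝ → ℝ be a continuous function with lim_{x→−∞} f(x) = −∞, lim_{x→+∞} f(x) = +∞, and inf_{x ≤ y} (f(y) − f(x)) > −δ₀. Then for every h ∈ (0,T), every 𝔽-stopping time τ taking values in [0, T−h), every c₀ > 0, and each j ∈ {−1, 0, 1}, one has P(F_{f(X)}^j(τ, h, δ₀, c₀) | 𝓕_τ) > 0 almost surely, where f(X) denotes the process (f(X_t))_{t∈[0,T]}. -/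
/-!
Fix `n` and work on the `ℱ_τ`-measurable event `{|X_τ| ≤ n}`. There `f` is uniformly
continuous near `X_τ`, and by coercivity it drops by more than `c₀` once its argument drops by
some `c_n`; together with `f y - f x ≥ d > -δ₀` for `x ≤ y` this gives, for suitable
`η_n, c_n > 0`, the pathwise inclusion
`{|X_τ| ≤ n} ∩ F_X^j(τ, h, η_n, c_n) ⊆ F_{f(X)}^j(τ, h, δ₀, c₀)`.
Pulling the indicator of `{|X_τ| ≤ n}` out of the conditional expectation, condition (A) for `X`
yields `P(F_{f(X)}^j | ℱ_τ) > 0` almost surely on `{|X_τ| ≤ n}`, and these events exhaust `Ω`.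
The case `j = -1` is the case `j = 1` for `-X` and `y ↦ -f (-y)`.
-/

open MeasureTheory Set Filter

noncomputable section

/-- Condition (A) of the paper: for every `h ∈ (0,T)`, every stopping time `τ` with values
in `[0, T−h)`, every `δ > 0`, `c > 0` and each `j ∈ {−1,0,1}`,
`P(F_X^j(τ,h,δ,c) | ℱ_τ) > 0` almost surely. -/
def CondA {Ω : Type*} {m : MeasurableSpace Ω} (P : Measure Ω) (ℱ : Filtration ℝ m)
    (T : ℝ) (X : ℝ → Ω → ℝ) : Prop :=
  ∀ h ∈ Ioo (0:ℝ) T, ∀ (τ : Ω → ℝ) (hτ : IsStoppingTime ℱ (fun ω => (τ ω : WithTop ℝ))),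
    (∀ ω, τ ω ∈ Ico (0:ℝ) (T - h)) →
    ∀ δ > (0:ℝ), ∀ c > (0:ℝ), ∀ j ∈ ({-1, 0, 1} : Set ℤ),
    ∀ᵐ ω ∂P, 0 < (P[(FXev X T τ h δ c j).indicator (fun _ => (1:ℝ)) |
        hτ.measurableSpace]) ω

theorem Continuous.exists_pos_forall_abs_sub_lt {f : ℝ → ℝ} (hf : Continuous f) (r : ℝ)
    {ε : ℝ} (hε : 0 < ε) : ∃ η > 0, ∀ x y, |x| ≤ r → |y - x| < η → |f y - f x| < ε := by
  obtain ⟨η, hη, H⟩ := Metric.mem_uniformity_dist.1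
    ((isCompact_Icc (a := -r) (b := r)).uniformContinuousAt_of_continuousAt f
      (fun x _ => hf.continuousAt) (Metric.dist_mem_uniformity hε))
  refine ⟨η, hη, fun x y hx hxy => ?_⟩
  rw [← Real.dist_eq, dist_comm] at hxy ⊢
  exact H hxy (abs_le.1 hx)

theorem exists_pos_forall_sub_le_of_tendsto_atBot {f : ℝ → ℝ} (hf : Continuous f)
    (hbot : Tendsto f atBot atBot) (r M : ℝ) :
    ∃ c > 0, ∀ x y, |x| ≤ r → y - x < -c → f y - f x ≤ -M := by
  obtain ⟨b, hb⟩ := (isCompact_Icc (a := -r) (b := r)).bddBelow_image hf.continuousOn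
  obtain ⟨K, hK⟩ := eventually_atBot.1 (tendsto_atBot.1 hbot (b - M))
  refine ⟨max 1 (r - K), by positivity, fun x y hx hyx => ?_⟩
  have hfx : b ≤ f x := hb (mem_image_of_mem f (abs_le.1 hx))
  have hfy : f y ≤ b - M := hK y (by linarith [le_max_right 1 (r - K), (abs_le.1 hx).2])
  linarith

theorem sSup_image_lt_of_sSup_image_lt {S : Set ℝ} (hS : S.Nonempty) {u v : ℝ → ℝ}
    (hu : BddAbove (u '' S)) {δ δ' B : ℝ} (huv : ∀ t ∈ S, u t < δ → v t ≤ B) (hB : B < δ')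
    (h : sSup (u '' S) < δ) : sSup (v '' S) < δ' := by
  refine (csSup_le (hS.image v) ?_).trans_lt hB
  rintro _ ⟨t, ht, rfl⟩
  exact huv t ht ((le_csSup hu (mem_image_of_mem u ht)).trans_lt h)

theorem sSup_lt_iff_exists_nat {S : Set ℝ} (hne : S.Nonempty) (hbdd : BddAbove S) {δ : ℝ} :
    sSup S < δ ↔ ∃ n : ℕ, ∀ x ∈ S, x ≤ δ - 1 / (n + 1) := by
  constructor
  · intro h
    obtain ⟨n, hn⟩ := exists_nat_one_div_lt (sub_pos.2 h)
    exact ⟨n, fun x hx => by linarith [le_csSup hbdd hx]⟩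
  · rintro ⟨n, hn⟩
    have : (0 : ℝ) < 1 / (n + 1) := Nat.one_div_pos_of_nat
    linarith [csSup_le hne hn]

theorem forall_le_iff_forall_rat_le {v : ℝ → ℝ} (hv : Continuous v) {a b : ℝ} (hab : a < b)
    {A : Set ℝ} (hA₁ : Ioo a b ⊆ A) (hA₂ : A ⊆ Icc a b) {B : ℝ} :
    (∀ t ∈ A, v t ≤ B) ↔ ∀ q : ℚ, (q : ℝ) ∈ A → v q ≤ B := by
  refine ⟨fun H q hq => H q hq, fun H t ht => ?_⟩
  have hdense : Icc a b ⊆ closure (Ioo a b ∩ range ((↑) : ℚ → ℝ)) := by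
    rw [← closure_Ioo hab.ne]
    exact closure_minimal (Rat.denseRange_cast.open_subset_closure_inter isOpen_Ioo)
      isClosed_closure
  refine closure_minimal (t := {t | v t ≤ B}) ?_ (isClosed_le hv continuous_const)
    (hdense (hA₂ ht))
  rintro _ ⟨hq, q, rfl⟩
  exact H q (hA₁ hq)

theorem ContinuousOn.increment {x : ℝ → ℝ} {T s : ℝ} (hx : ContinuousOn x (Icc 0 T))
    (hs : 0 ≤ s) : ContinuousOn (fun t => x (s + t) - x s) (Icc 0 (T - s)) :=
  (hx.comp (f := (s + ·)) (by fun_prop)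
    fun t ht => ⟨by linarith [ht.1], by linarith [ht.2]⟩).sub continuousOn_const

theorem ContinuousOn.comp_projIcc {x : ℝ → ℝ} {T : ℝ} (hT : 0 ≤ T)
    (hx : ContinuousOn x (Icc 0 T)) : Continuous fun t => x (projIcc 0 T hT t) :=
  hx.comp_continuous (continuous_subtype_val.comp continuous_projIcc) fun t => (projIcc 0 T hT t).2

section Events

variable {Ω : Type*} {X : ℝ → Ω → ℝ} {τ : Ω → ℝ} {T h : ℝ} {f : ℝ → ℝ}

theorem FXev_neg_one (X : ℝ → Ω → ℝ) (T : ℝ) (τ : Ω → ℝ) (h δ c : ℝ) :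
    FXev X T τ h δ c (-1) = FXev (fun t ω => -X t ω) T τ h δ c 1 := by
  ext ω
  simp [FXev, Real.sInf_def, ← image_neg_eq_neg, image_image, lt_neg, neg_add_eq_sub]

theorem FXev_congr {X' : ℝ → Ω → ℝ} (hXX' : ∀ ω, ∀ t ∈ Icc 0 T, X t ω = X' t ω)
    (hτ : ∀ ω, τ ω ∈ Ico 0 (T - h)) (hh : 0 ≤ h) (δ c : ℝ) (j : ℤ) :
    FXev X T τ h δ c j = FXev X' T τ h δ c j := by
  have hL : ∀ ω, ∀ t ∈ Icc 0 (T - τ ω),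
      X (τ ω + t) ω - X (τ ω) ω = X' (τ ω + t) ω - X' (τ ω) ω := by
    intro ω t ht
    obtain ⟨h0, h1⟩ := hτ ω
    rw [hXX' ω _ ⟨by linarith [ht.1], by linarith [ht.2]⟩, hXX' ω _ ⟨h0, by linarith⟩]
  ext ω
  have hIcc : Icc 0 h ⊆ Icc 0 (T - τ ω) := Icc_subset_Icc_right (by linarith [(hτ ω).2])
  have hIco₀ : Ico 0 (T - τ ω) ⊆ Icc 0 (T - τ ω) := Ico_subset_Icc_self
  have hIco : Ico h (T - τ ω) ⊆ Icc 0 (T - τ ω) := fun t ht => ⟨hh.trans ht.1, ht.2.le⟩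
  simp only [FXev]
  split_ifs <;> simp only [mem_ofPred_eq, image_congr fun t ht => hL ω t (hIcc ht),
    image_congr fun t ht => hL ω t (hIco ht),
    image_congr fun t ht => congrArg abs (hL ω t (hIco₀ ht))]

theorem mem_FXev_zero_comp {ω : Ω} (hX : ContinuousOn (X · ω) (Icc 0 T)) (hτ : τ ω ∈ Ico 0 T)
    {η ε δ₀ c c₀ : ℝ} (hf : ∀ y, |y - X (τ ω) ω| < η → |f y - f (X (τ ω) ω)| ≤ ε)
    (hε : ε < δ₀) (hω : ω ∈ FXev X T τ h η c 0) :
    ω ∈ FXev (fun t ω => f (X t ω)) T τ h δ₀ c₀ 0 := by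
  simp only [FXev, if_pos, mem_ofPred_eq] at hω ⊢
  exact sSup_image_lt_of_sSup_image_lt (nonempty_Ico.2 (sub_pos.2 hτ.2))
    ((isCompact_Icc.bddAbove_image (hX.increment hτ.1).abs).mono
      (image_mono Ico_subset_Icc_self))
    (fun _ _ => hf _) hε hω

theorem mem_FXev_one_comp {ω : Ω} (hX : ContinuousOn (X · ω) (Icc 0 T))
    (hτ : τ ω ∈ Ico 0 (T - h)) (hh : 0 ≤ h) {η c δ₀ c₀ B₁ B₂ : ℝ}
    (hup : ∀ y, y - X (τ ω) ω < η → f y - f (X (τ ω) ω) ≤ B₁)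
    (hdown : ∀ y, y - X (τ ω) ω < -c → f y - f (X (τ ω) ω) ≤ B₂)
    (hB₁ : B₁ < δ₀) (hB₂ : B₂ < -c₀) (hω : ω ∈ FXev X T τ h η c 1) :
    ω ∈ FXev (fun t ω => f (X t ω)) T τ h δ₀ c₀ 1 := by
  simp only [FXev, one_ne_zero, if_false, if_pos, mem_ofPred_eq] at hω ⊢
  have hTh : h < T - τ ω := by linarith [hτ.2]
  have hbdd : ∀ S ⊆ Icc 0 (T - τ ω),
      BddAbove ((fun t => X (τ ω + t) ω - X (τ ω) ω) '' S) := fun S hS =>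
    (isCompact_Icc.bddAbove_image (hX.increment hτ.1)).mono (image_mono hS)
  exact ⟨sSup_image_lt_of_sSup_image_lt (nonempty_Icc.2 hh)
      (hbdd _ (Icc_subset_Icc_right hTh.le)) (fun _ _ => hup _) hB₁ hω.1,
    sSup_image_lt_of_sSup_image_lt (nonempty_Ico.2 hTh)
      (hbdd _ fun t ht => ⟨hh.trans ht.1, ht.2.le⟩) (fun _ _ => hdown _) hB₂ hω.2⟩

theorem exists_FXev_zero_subset_comp (hX : ∀ ω, ContinuousOn (X · ω) (Icc 0 T))
    (hτ : ∀ ω, τ ω ∈ Ico 0 T) (hf : Continuous f) {δ₀ : ℝ} (hδ₀ : 0 < δ₀) (r c c₀ : ℝ) :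
    ∃ η > 0, {ω | |X (τ ω) ω| ≤ r} ∩ FXev X T τ h η c 0 ⊆
      FXev (fun t ω => f (X t ω)) T τ h δ₀ c₀ 0 := by
  obtain ⟨η, hη, hunif⟩ := hf.exists_pos_forall_abs_sub_lt r (half_pos hδ₀)
  exact ⟨η, hη, fun ω ⟨hr, hω⟩ => mem_FXev_zero_comp (hX ω) (hτ ω)
    (fun y hy => (hunif _ y hr hy).le) (half_lt_self hδ₀) hω⟩

theorem exists_FXev_one_subset_comp (hX : ∀ ω, ContinuousOn (X · ω) (Icc 0 T))
    (hτ : ∀ ω, τ ω ∈ Ico 0 (T - h)) (hh : 0 ≤ h) (hf : Continuous f)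
    (hbot : Tendsto f atBot atBot) {d δ₀ : ℝ} (hd : -δ₀ < d)
    (hmono : ∀ x y, x ≤ y → d ≤ f y - f x) (r c₀ : ℝ) :
    ∃ η > 0, ∃ c > 0, {ω | |X (τ ω) ω| ≤ r} ∩ FXev X T τ h η c 1 ⊆
      FXev (fun t ω => f (X t ω)) T τ h δ₀ c₀ 1 := by
  have hδ₀ : 0 < δ₀ := by linarith [hmono 0 0 le_rfl]
  obtain ⟨η, hη, hunif⟩ := hf.exists_pos_forall_abs_sub_lt r (half_pos hδ₀)
  obtain ⟨c, hc, hfall⟩ := exists_pos_forall_sub_le_of_tendsto_atBot hf hbot r (c₀ + 1)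
  have hup : ∀ x y, |x| ≤ r → y - x < η → f y - f x ≤ max (-d) (δ₀ / 2) := by
    intro x y hx hyx
    rcases le_or_gt y x with hle | hlt
    · linarith [hmono y x hle, le_max_left (-d) (δ₀ / 2)]
    · have := (abs_lt.1 (hunif x y hx (abs_lt.2 ⟨by linarith, hyx⟩))).2
      linarith [le_max_right (-d) (δ₀ / 2)]
  exact ⟨η, hη, c, hc, fun ω ⟨hr, hω⟩ => mem_FXev_one_comp (hX ω) (hτ ω) hh
    (hup _ · hr) (hfall _ · hr) (max_lt (by linarith) (by linarith)) (by linarith) hω⟩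

theorem exists_FXev_subset_comp (hX : ∀ ω, ContinuousOn (X · ω) (Icc 0 T))
    (hτ : ∀ ω, τ ω ∈ Ico 0 (T - h)) (hh : 0 ≤ h) (hf : Continuous f)
    (hbot : Tendsto f atBot atBot) (htop : Tendsto f atTop atTop) {d δ₀ : ℝ} (hd : -δ₀ < d)
    (hmono : ∀ x y, x ≤ y → d ≤ f y - f x) (r c₀ : ℝ) {j : ℤ}
    (hj : j ∈ ({-1, 0, 1} : Set ℤ)) :
    ∃ η > 0, ∃ c > 0, {ω | |X (τ ω) ω| ≤ r} ∩ FXev X T τ h η c j ⊆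
      FXev (fun t ω => f (X t ω)) T τ h δ₀ c₀ j := by
  rcases hj with rfl | rfl | rfl
  · obtain ⟨η, hη, c, hc, hsub⟩ := exists_FXev_one_subset_comp (X := fun t ω => -X t ω)
      (f := fun y => -f (-y)) (fun ω => (hX ω).neg) hτ hh (hf.comp continuous_neg).neg
      (tendsto_neg_atTop_atBot.comp (htop.comp tendsto_neg_atBot_atTop)) hd
      (fun x y hxy => by linarith [hmono (-y) (-x) (neg_le_neg hxy)]) r c₀
    refine ⟨η, hη, c, hc, ?_⟩
    rw [FXev_neg_one, FXev_neg_one]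
    simpa only [abs_neg, neg_neg] using hsub
  · obtain ⟨η, hη, hsub⟩ := exists_FXev_zero_subset_comp hX
      (fun ω => ⟨(hτ ω).1, by linarith [(hτ ω).2]⟩) hf
      (by linarith [hmono 0 0 le_rfl] : 0 < δ₀) r 1 c₀
    exact ⟨η, hη, 1, one_pos, hsub⟩
  · exact exists_FXev_one_subset_comp hX hτ hh hf hbot hd hmono r c₀

end Events

section Measurability

variable {Ω : Type*} [MeasurableSpace Ω] {Y : ℝ → Ω → ℝ} {τ : Ω → ℝ} {T h : ℝ}

theorem measurableSet_sSup_image_lt {w : Ω → ℝ → ℝ} (hwc : ∀ ω, Continuous (w ω))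
    (hwm : ∀ t, Measurable (w · t)) {a : ℝ} {b : Ω → ℝ} (hab : ∀ ω, a < b ω)
    {A : Ω → Set ℝ} (hA₁ : ∀ ω, Ioo a (b ω) ⊆ A ω) (hA₂ : ∀ ω, A ω ⊆ Icc a (b ω))
    (hAm : ∀ t, MeasurableSet {ω | t ∈ A ω}) (δ : ℝ) :
    MeasurableSet {ω | sSup (w ω '' A ω) < δ} := by
  have hrat : {ω | sSup (w ω '' A ω) < δ} =
      ⋃ n : ℕ, ⋂ q : ℚ, {ω | (q : ℝ) ∈ A ω → w ω q ≤ δ - 1 / (n + 1)} := by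
    ext ω
    have hne : (w ω '' A ω).Nonempty := ((nonempty_Ioo.2 (hab ω)).mono (hA₁ ω)).image _
    have hbdd : BddAbove (w ω '' A ω) :=
      (isCompact_Icc.bddAbove_image (hwc ω).continuousOn).mono (image_mono (hA₂ ω))
    simp only [mem_ofPred_eq, mem_iUnion, mem_iInter, sSup_lt_iff_exists_nat hne hbdd,
      forall_mem_image, forall_le_iff_forall_rat_le (hwc ω) (hab ω) (hA₁ ω) (hA₂ ω)]
  rw [hrat]
  exact .iUnion fun n => .iInter fun q => (hAm q).imp (measurableSet_le (hwm q) measurable_const)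

theorem measurable_increment (hYm : ∀ t, Measurable (Y t)) (hYc : ∀ ω, Continuous (Y · ω))
    (hτ : Measurable τ) (t : ℝ) : Measurable fun ω => Y (τ ω + t) ω - Y (τ ω) ω := by
  have hY : Measurable (Function.uncurry Y) :=
    (stronglyMeasurable_uncurry_of_continuous_of_stronglyMeasurable hYc
      fun t => (hYm t).stronglyMeasurable).measurable
  exact (hY.comp ((hτ.add_const t).prodMk measurable_id)).sub (hY.comp (hτ.prodMk measurable_id))

theorem measurableSet_mem_Ico_sub (hτ : Measurable τ) (a T t : ℝ) :
    MeasurableSet {ω | t ∈ Ico a (T - τ ω)} :=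
  (MeasurableSet.const (a ≤ t)).inter
    (measurableSet_lt (f := fun _ => t) measurable_const (measurable_const.sub hτ))

theorem measurableSet_FXev_zero_of_continuous (hYm : ∀ t, Measurable (Y t))
    (hYc : ∀ ω, Continuous (Y · ω)) (hτ : Measurable τ) (hτT : ∀ ω, τ ω < T) (h δ c : ℝ) :
    MeasurableSet (FXev Y T τ h δ c 0) := by
  simp only [FXev, if_pos]
  exact measurableSet_sSup_image_lt
    (fun ω => (((hYc ω).comp (continuous_const_add _)).sub continuous_const).abs)
    (fun t => (measurable_increment hYm hYc hτ t).abs) (fun ω => sub_pos.2 (hτT ω))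
    (fun _ => Ioo_subset_Ico_self) (fun _ => Ico_subset_Icc_self)
    (measurableSet_mem_Ico_sub hτ 0 T) δ

theorem measurableSet_FXev_one_of_continuous (hYm : ∀ t, Measurable (Y t))
    (hYc : ∀ ω, Continuous (Y · ω)) (hτ : Measurable τ) (hh : 0 < h)
    (hτh : ∀ ω, h < T - τ ω) (δ c : ℝ) : MeasurableSet (FXev Y T τ h δ c 1) := by
  have hwc ω : Continuous fun t => Y (τ ω + t) ω - Y (τ ω) ω :=
    ((hYc ω).comp (continuous_const_add _)).sub continuous_const
  simp only [FXev, one_ne_zero, if_false, if_pos, ofPred_and]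
  exact (measurableSet_sSup_image_lt hwc (measurable_increment hYm hYc hτ) (fun _ => hh)
      (fun _ => Ioo_subset_Icc_self) (fun _ => subset_rfl) (fun _ => .const _) δ).inter
    (measurableSet_sSup_image_lt hwc (measurable_increment hYm hYc hτ) hτh
      (fun _ => Ioo_subset_Ico_self) (fun _ => Ico_subset_Icc_self)
      (measurableSet_mem_Ico_sub hτ h T) (-c))

theorem measurableSet_FXev_of_continuous (hYm : ∀ t, Measurable (Y t))
    (hYc : ∀ ω, Continuous (Y · ω)) (hτ : Measurable τ) (hh : 0 < h)
    (hτh : ∀ ω, h < T - τ ω) (δ c : ℝ) {j : ℤ} (hj : j ∈ ({-1, 0, 1} : Set ℤ)) :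
    MeasurableSet (FXev Y T τ h δ c j) := by
  rcases hj with rfl | rfl | rfl
  · rw [FXev_neg_one]
    exact measurableSet_FXev_one_of_continuous (fun t => (hYm t).neg) (fun ω => (hYc ω).neg)
      hτ hh hτh δ c
  · exact measurableSet_FXev_zero_of_continuous hYm hYc hτ
      (fun ω => by linarith [hτh ω]) h δ c
  · exact measurableSet_FXev_one_of_continuous hYm hYc hτ hh hτh δ c

theorem measurableSet_FXev (hYm : ∀ t, Measurable (Y t))
    (hYc : ∀ ω, ContinuousOn (Y · ω) (Icc 0 T)) (hτ : Measurable τ)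
    (hτh : ∀ ω, τ ω ∈ Ico 0 (T - h)) (hh : h ∈ Ioo 0 T) (δ c : ℝ) {j : ℤ}
    (hj : j ∈ ({-1, 0, 1} : Set ℤ)) :
    MeasurableSet (FXev Y T τ h δ c j) := by
  have hT : 0 ≤ T := (hh.1.trans hh.2).le
  rw [FXev_congr (X' := fun t ω => Y (projIcc 0 T hT t) ω)
    (fun ω t ht => by rw [projIcc_of_mem hT ht]) hτh hh.1.le]
  exact measurableSet_FXev_of_continuous (fun t => hYm _) (fun ω => (hYc ω).comp_projIcc hT)
    hτ hh.1 (fun ω => by linarith [(hτh ω).2]) δ c hj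

end Measurability

section Conditioning

variable {Ω : Type*}

theorem ae_pos_condExp_indicator_of_forall_inter_subset {ι : Type*} [Countable ι]
    {m m₀ : MeasurableSpace Ω} {μ : Measure Ω} [IsFiniteMeasure μ] (hm : m ≤ m₀)
    {A B : ι → Set Ω} {C : Set Ω} (hA : ∀ i, MeasurableSet[m] (A i))
    (hAcover : ∀ ω, ∃ i, ω ∈ A i) (hB : ∀ i, MeasurableSet (B i)) (hC : MeasurableSet C)
    (hsub : ∀ i, A i ∩ B i ⊆ C)
    (hpos : ∀ i, ∀ᵐ ω ∂μ, 0 < μ[(B i).indicator (fun _ => (1 : ℝ)) | m] ω) :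
    ∀ᵐ ω ∂μ, 0 < μ[C.indicator (fun _ => (1 : ℝ)) | m] ω := by
  have hlocal i : ∀ᵐ ω ∂μ, ω ∈ A i → 0 < μ[C.indicator (fun _ => (1 : ℝ)) | m] ω := by
    have hmono : μ[(A i ∩ B i).indicator (fun _ => (1 : ℝ)) | m]
        ≤ᵐ[μ] μ[C.indicator (fun _ => (1 : ℝ)) | m] :=
      condExp_mono ((integrable_const 1).indicator ((hm _ (hA i)).inter (hB i)))
        ((integrable_const 1).indicator hC)
        (ae_of_all _ (indicator_le_indicator_of_subset (hsub i) fun _ => zero_le_one))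
    have hpull : μ[(A i ∩ B i).indicator (fun _ => (1 : ℝ)) | m]
        =ᵐ[μ] (A i).indicator (μ[(B i).indicator (fun _ => (1 : ℝ)) | m]) := by
      rw [← indicator_indicator]
      exact condExp_indicator ((integrable_const 1).indicator (hB i)) (hA i)
    filter_upwards [hpos i, hmono, hpull] with ω hω hle heq hωA
    rw [indicator_of_mem hωA] at heq
    linarith
  filter_upwards [ae_all_iff.2 hlocal] with ω hω
  obtain ⟨i, hi⟩ := hAcover ω
  exact hω i hi

theorem measurable_stoppedValue_of_continuousOn {m : MeasurableSpace Ω}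
    {ℱ : Filtration ℝ m} {X : ℝ → Ω → ℝ} (hadp : Adapted ℱ X) {T : ℝ} (hT : 0 ≤ T)
    (hX : ∀ ω, ContinuousOn (X · ω) (Icc 0 T)) {τ : Ω → ℝ}
    (hτ : IsStoppingTime ℱ fun ω => (τ ω : WithTop ℝ)) (hτT : ∀ ω, τ ω ∈ Icc 0 T) :
    Measurable[hτ.measurableSpace] fun ω => X (τ ω) ω := by
  -- `X ∘ projIcc` is adapted only to `t ↦ ℱ (max 0 t)`; since `τ ≥ 0`, the σ-algebra of `τ`
  -- for that filtration is contained in the one for `ℱ`.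
  let ℱ' : Filtration ℝ m :=
    ⟨fun t => ℱ (max 0 t), fun s t hst => ℱ.mono (max_le_max le_rfl hst), fun t => ℱ.le _⟩
  have hτ' : IsStoppingTime ℱ' fun ω => (τ ω : WithTop ℝ) :=
    fun t => ℱ.mono (le_max_right 0 t) _ (hτ t)
  have hY : IsStronglyProgressive ℱ' fun t ω => X (projIcc 0 T hT t) ω :=
    StronglyAdapted.isStronglyProgressive_of_continuous
      (fun t => ((hadp _).mono (ℱ.mono (max_le_max le_rfl (min_le_right T t)))
        le_rfl).stronglyMeasurable)
      fun ω => (hX ω).comp_projIcc hT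
  have hle : hτ'.measurableSpace ≤ hτ.measurableSpace := by
    refine fun s hs => ⟨iSup_le (fun t => le_iSup (fun t => ℱ t) (max 0 t)) _ hs.1, fun i => ?_⟩
    rcases le_or_gt 0 i with hi | hi
    · have hs' : MeasurableSet[ℱ (max 0 i)] (s ∩ {ω | (τ ω : WithTop ℝ) ≤ i}) := hs.2 i
      rwa [max_eq_right hi] at hs'
    · convert @MeasurableSet.empty _ (ℱ i)
      ext ω
      simpa using fun _ => hi.trans_le (hτT ω).1
  convert (measurable_stoppedValue hY hτ').mono hle le_rfl using 1
  funext ω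
  simp [stoppedValue, projIcc_of_mem hT (hτT ω)]

end Conditioning

theorem composition_case_a_general {Ω : Type*} {m : MeasurableSpace Ω} (P : Measure Ω)
    [IsProbabilityMeasure P] (ℱ : Filtration ℝ m) (T : ℝ)
    (X : ℝ → Ω → ℝ) (hadp : Adapted ℱ X)
    (hcont : ∀ ω, ContinuousOn (fun t => X t ω) (Icc 0 T))
    (hA : CondA P ℱ T X)
    (δ₀ : ℝ) (f : ℝ → ℝ) (hf : Continuous f)
    (hbot : Tendsto f atBot atBot) (htop : Tendsto f atTop atTop)
    (hmin : ∃ d : ℝ, -δ₀ < d ∧ ∀ x y : ℝ, x ≤ y → d ≤ f y - f x) :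
    ∀ h ∈ Ioo (0:ℝ) T, ∀ (τ : Ω → ℝ) (hτ : IsStoppingTime ℱ (fun ω => (τ ω : WithTop ℝ))),
      (∀ ω, τ ω ∈ Ico (0:ℝ) (T - h)) →
      ∀ c₀ > (0:ℝ), ∀ j ∈ ({-1, 0, 1} : Set ℤ),
      ∀ᵐ ω ∂P, 0 < (P[(FXev (fun t ω' => f (X t ω')) T τ h δ₀ c₀ j).indicator
          (fun _ => (1:ℝ)) | hτ.measurableSpace]) ω := by
  obtain ⟨d, hd, hmono⟩ := hmin
  intro h hh τ hτ hτh c₀ _ j hj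
  choose η hη c hc hsub using fun n : ℕ =>
    exists_FXev_subset_comp hcont hτh hh.1.le hf hbot htop hd hmono n c₀ hj
  have hτm : Measurable τ := measurable_of_Iic fun i => by
    simpa only [preimage, mem_Iic, WithTop.coe_le_coe] using ℱ.le i _ (hτ i)
  have hXτ := measurable_stoppedValue_of_continuousOn hadp (hh.1.trans hh.2).le hcont hτ
    fun ω => ⟨(hτh ω).1, by linarith [(hτh ω).2, hh.1]⟩
  have hXm t : Measurable (X t) := (hadp t).mono (ℱ.le t) le_rfl
  exact ae_pos_condExp_indicator_of_forall_inter_subset hτ.measurableSpace_le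
    (fun n : ℕ => measurable_abs.comp hXτ measurableSet_Iic)
    (fun ω => exists_nat_ge |X (τ ω) ω|)
    (fun n => measurableSet_FXev hXm hcont hτm hτh hh _ _ hj)
    (measurableSet_FXev (fun t => hf.measurable.comp (hXm t))
      (fun ω => hf.comp_continuousOn (hcont ω)) hτm hτh hh _ _ hj)
    hsub fun n => hA h hh τ hτ hτh _ (hη n) _ (hc n) j hj

/-- Theorem 3.1(a) of the paper: if `X` satisfies condition (A) and `f` is continuous with
`f(−∞) = −∞`, `f(+∞) = +∞` and `inf_{x ≤ y} (f(y) − f(x)) > −δ₀`, then for every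
`h ∈ (0,T)`, every stopping time `τ` with values in `[0, T−h)`, every `c₀ > 0` and each
`j ∈ {−1,0,1}`, one has `P(F_{f(X)}^j(τ, h, δ₀, c₀) | ℱ_τ) > 0` almost surely. -/
theorem composition_case_a {Ω : Type*} {m : MeasurableSpace Ω} (P : Measure Ω)
    [IsProbabilityMeasure P] (ℱ : Filtration ℝ m) (T : ℝ) (hT : 0 < T)
    (X : ℝ → Ω → ℝ) (hadp : Adapted ℱ X)
    (hcont : ∀ ω, ContinuousOn (fun t => X t ω) (Icc 0 T))
    (htriv : ∀ s : Set Ω, MeasurableSet[ℱ 0] s → P s = 0 ∨ P s = 1)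
    (hA : CondA P ℱ T X)
    (δ₀ : ℝ) (hδ₀ : 0 < δ₀) (f : ℝ → ℝ) (hf : Continuous f)
    (hbot : Tendsto f atBot atBot) (htop : Tendsto f atTop atTop)
    (hmin : ∃ d : ℝ, -δ₀ < d ∧ ∀ x y : ℝ, x ≤ y → d ≤ f y - f x) :
    ∀ h ∈ Ioo (0:ℝ) T, ∀ (τ : Ω → ℝ) (hτ : IsStoppingTime ℱ (fun ω => (τ ω : WithTop ℝ))),
      (∀ ω, τ ω ∈ Ico (0:ℝ) (T - h)) →
      ∀ c₀ > (0:ℝ), ∀ j ∈ ({-1, 0, 1} : Set ℤ),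
      ∀ᵐ ω ∂P, 0 < (P[(FXev (fun t ω' => f (X t ω')) T τ h δ₀ c₀ j).indicator
          (fun _ => (1:ℝ)) | hτ.measurableSpace]) ω :=
  composition_case_a_general P ℱ T X hadp hcont hA δ₀ f hf hbot htop hmin

end
end

section
/- Define f : ℝ → ℝ by f(x) = |x| for x ≥ −1 and f(x) = x + 2 for x < −1. Then for every continuous function w : [0,1] → ℝ with w(0) = 0, one has sup_{t∈[0,1]} |f(w(t)) + t| ≥ 1. Consequently, for every α ∈ (0,1], sup_{t∈[0,1]} |α f(w(t)) − α f(w(0)) − g(t)| ≥ α, where g(t) = −αt; in particular, with probability one the paths of S^{(α)}_t = α f(B_t) for a process B with continuous paths started at 0 stay at uniform distance at least α from the path S^{(α)}_0 + g, so S^{(α)} fails the conditional full support property in C[0,1]. -/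
open MeasureTheory Set Filter

noncomputable section

/-- The function of Example 3.6 of the paper: `f(x) = |x|` for `x ≥ −1` and `f(x) = x + 2`
for `x < −1`. -/
def fEx (x : ℝ) : ℝ := if -1 ≤ x then |x| else x + 2

/-- Example 3.6 of the paper (deterministic pathwise claim and its consequence): for every
continuous `w : [0,1] → ℝ` with `w(0) = 0`, `sup_{t∈[0,1]} |f(w(t)) + t| ≥ 1`; hence for
every `α ∈ (0,1]`, `sup_{t∈[0,1]} |α f(w(t)) − α f(w(0)) − g(t)| ≥ α` with `g(t) = −α t`;
and consequently, for any process `B` with continuous paths started at `0`, with probability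
one the path of `S^{(α)} = α f(B)` stays at uniform distance at least `α` from `S^{(α)}_0 + g`,
so `S^{(α)}` fails the conditional full support property in `C[0,1]`. -/
theorem example_fails_CFS {Ω : Type*} {m : MeasurableSpace Ω} (P : Measure Ω)
    [IsProbabilityMeasure P] (B : ℝ → Ω → ℝ)
    (hBcont : ∀ ω, ContinuousOn (fun t => B t ω) (Icc 0 1))
    (hB0 : ∀ ω, B 0 ω = 0) :
    (∀ w : ℝ → ℝ, ContinuousOn w (Icc 0 1) → w 0 = 0 →
      1 ≤ sSup ((fun t => |fEx (w t) + t|) '' Icc 0 1)) ∧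
    (∀ α ∈ Ioc (0:ℝ) 1, ∀ w : ℝ → ℝ, ContinuousOn w (Icc 0 1) → w 0 = 0 →
      α ≤ sSup ((fun t => |α * fEx (w t) - α * fEx (w 0) - (-(α * t))|) '' Icc 0 1)) ∧
    (∀ α ∈ Ioc (0:ℝ) 1,
      P {ω | α ≤ sSup ((fun t => |α * fEx (B t ω) - α * fEx (B 0 ω) - (-(α * t))|) ''
        Icc 0 1)} = 1) := by
  have hfc : Continuous fEx := by
    have h : fEx = fun x : ℝ => if (fun _ : ℝ => (-1:ℝ)) x ≤ id x then |x| else x + 2 := rfl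
    rw [h]
    exact Continuous.if_le continuous_abs (continuous_id.add continuous_const)
      continuous_const continuous_id (fun x hx => by simp only [id_eq] at hx; rw [← hx]; norm_num)
  have key : ∀ w : ℝ → ℝ, ContinuousOn w (Icc 0 1) → w 0 = 0 →
      ∃ t ∈ Icc (0:ℝ) 1, 1 ≤ |fEx (w t) + t| := by
    intro w hw h0
    by_cases h1 : -1 ≤ w 1
    · refine ⟨1, ⟨by norm_num, le_refl 1⟩, ?_⟩
      rw [fEx, if_pos h1, abs_of_nonneg (by positivity)]
      linarith [abs_nonneg (w 1)]
    · push_neg at h1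
      have hsub := intermediate_value_Icc' (by norm_num : (0:ℝ) ≤ 1) hw
      obtain ⟨t, ht, hwt⟩ := hsub (⟨by linarith, by rw [h0]; norm_num⟩ :
        (-1:ℝ) ∈ Icc (w 1) (w 0))
      refine ⟨t, ht, ?_⟩
      rw [hwt]
      have hf1 : fEx (-1) = 1 := by norm_num [fEx]
      rw [hf1, abs_of_nonneg (by linarith [ht.1] : (0:ℝ) ≤ 1 + t)]
      linarith [ht.1]
  have bdd : ∀ (c : ℝ) (w : ℝ → ℝ), ContinuousOn w (Icc 0 1) →
      BddAbove ((fun t => |fEx (w t) * c + c * t|) '' Icc 0 1) := by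
    intro c w hw
    apply isCompact_Icc.bddAbove_image
    exact (((hfc.comp_continuousOn hw).mul continuousOn_const).add
      (continuousOn_const.mul continuousOn_id)).abs
  have part1 : ∀ w : ℝ → ℝ, ContinuousOn w (Icc 0 1) → w 0 = 0 →
      1 ≤ sSup ((fun t => |fEx (w t) + t|) '' Icc 0 1) := by
    intro w hw h0
    obtain ⟨t, ht, hge⟩ := key w hw h0
    have hb := bdd 1 w hw
    simp only [mul_one, one_mul] at hb
    exact le_trans hge (le_csSup hb ⟨t, ht, rfl⟩)
  have part2 : ∀ α ∈ Ioc (0:ℝ) 1, ∀ w : ℝ → ℝ, ContinuousOn w (Icc 0 1) → w 0 = 0 →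
      α ≤ sSup ((fun t => |α * fEx (w t) - α * fEx (w 0) - (-(α * t))|) '' Icc 0 1) := by
    intro α hα w hw h0
    obtain ⟨t, ht, hge⟩ := key w hw h0
    have hf0 : fEx (w 0) = 0 := by rw [h0, fEx]; norm_num
    have heq : (fun t => |α * fEx (w t) - α * fEx (w 0) - (-(α * t))|)
        = fun t => |fEx (w t) * α + α * t| := by
      funext s; rw [hf0]; ring_nf
    rw [heq]
    have hval : α ≤ |fEx (w t) * α + α * t| := by
      have h2 : fEx (w t) * α + α * t = α * (fEx (w t) + t) := by ring
      rw [h2, abs_mul, abs_of_pos hα.1]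
      calc α = α * 1 := (mul_one α).symm
        _ ≤ α * |fEx (w t) + t| := by
            exact mul_le_mul_of_nonneg_left hge (le_of_lt hα.1)
    exact le_trans hval (le_csSup (bdd α w hw) ⟨t, ht, rfl⟩)
  refine ⟨part1, part2, ?_⟩
  intro α hα
  have huniv : {ω | α ≤ sSup ((fun t => |α * fEx (B t ω) - α * fEx (B 0 ω) - (-(α * t))|) ''
      Icc 0 1)} = univ :=
    Set.eq_univ_of_forall (fun ω => part2 α hα (fun t => B t ω) (hBcont ω) (hB0 ω))
  rw [huniv, measure_univ]

end
end

section
/- Define f : ℝ → ℝ by f(x) = |x| for x ≥ −1 and f(x) = x + 2 for x < −1. Then there is no continuous function w : [0,1] → ℝ with w(0) = 0 such that both sup_{t∈[0,1/2]} (f(w(t)) − f(w(0))) < 1/2 and sup_{t∈[1/2,1]} (f(w(t)) − f(w(0))) < −1. Consequently, for any process B with continuous paths starting at 0, the event F_{f(B)}^1(0, 1/2, 1/2, 1) has probability zero, so the process f(B) does not satisfy condition (A). -/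
open MeasureTheory Set Filter

noncomputable section

/-! A path `w` with `w 0 = 0` and `f (w h) < -1` has `w h < -3`, so by the intermediate value
theorem it passes through `-1` on `[0, h]`, where `f` equals `1`. Hence the supremum of
`f ∘ w - f (w 0)` over `[0, h]` is at least `1`, and every event `F^1(0, h, δ, c)` of `f(B)`
with `δ ≤ 1 ≤ c` is empty; an empty event cannot have positive conditional probability. -/

theorem continuous_fEx : Continuous fEx :=
  Continuous.if_le continuous_abs (continuous_id.add continuous_const) continuous_const
    continuous_id fun x hx => by subst hx; norm_num

theorem fEx_zero : fEx 0 = 0 := by simp [fEx]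

theorem fEx_neg_one : fEx (-1) = 1 := by norm_num [fEx]

theorem fEx_lt_neg_one_iff {x : ℝ} : fEx x < -1 ↔ x < -3 := by
  unfold fEx
  split_ifs with hx
  · constructor <;> intro h <;> linarith [abs_nonneg x]
  · constructor <;> intro h <;> linarith

theorem exists_fEx_eq_one_of_fEx_lt_neg_one {w : ℝ → ℝ} {a b : ℝ} (hab : a ≤ b)
    (hw : ContinuousOn w (Icc a b)) (ha : w a = 0) (hb : fEx (w b) < -1) :
    ∃ t ∈ Icc a b, fEx (w t) = 1 := by
  have hwb : w b < -3 := fEx_lt_neg_one_iff.1 hb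
  have hmem : (-1 : ℝ) ∈ Icc (w b) (w a) := ⟨by linarith, by rw [ha]; norm_num⟩
  obtain ⟨t, ht, hwt⟩ := intermediate_value_Icc' hab hw hmem
  exact ⟨t, ht, by rw [hwt, fEx_neg_one]⟩

theorem not_fEx_sSup_lt_and_sSup_lt {w : ℝ → ℝ} {h T δ c : ℝ} (hh : 0 ≤ h) (hhT : h < T)
    (hδ : δ ≤ 1) (hc : 1 ≤ c) (hw : ContinuousOn w (Icc 0 T)) (hw0 : w 0 = 0) :
    ¬ (sSup ((fun t => fEx (w t) - fEx (w 0)) '' Icc 0 h) < δ ∧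
      sSup ((fun t => fEx (w t) - fEx (w 0)) '' Ico h T) < -c) := by
  rintro ⟨hsup_early, hsup_late⟩
  have hbdd : ∀ s ⊆ Icc 0 T, BddAbove ((fun t => fEx (w t) - fEx (w 0)) '' s) := fun s hs =>
    ((isCompact_Icc.image_of_continuousOn
      ((continuous_fEx.comp_continuousOn hw).sub continuousOn_const)).bddAbove).mono
      (image_mono hs)
  have hlate : fEx (w h) < -1 := by
    have := (le_csSup (hbdd _ (Ico_subset_Icc_self.trans (Icc_subset_Icc_left hh)))
      (mem_image_of_mem _ (left_mem_Ico.2 hhT))).trans_lt hsup_late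
    rw [hw0, fEx_zero] at this
    linarith
  obtain ⟨t, ht, hft⟩ :=
    exists_fEx_eq_one_of_fEx_lt_neg_one hh (hw.mono (Icc_subset_Icc_right hhT.le)) hw0 hlate
  have := (le_csSup (hbdd _ (Icc_subset_Icc_right hhT.le)) (mem_image_of_mem _ ht)).trans_lt
    hsup_early
  rw [hft, hw0, fEx_zero] at this
  linarith

theorem FXev_fEx_one_eq_empty {Ω : Type*} {B : ℝ → Ω → ℝ} {h T δ c : ℝ} (hh : 0 ≤ h)
    (hhT : h < T) (hδ : δ ≤ 1) (hc : 1 ≤ c)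
    (hBcont : ∀ ω, ContinuousOn (fun t => B t ω) (Icc 0 T)) (hB0 : ∀ ω, B 0 ω = 0) :
    FXev (fun t ω => fEx (B t ω)) T (fun _ => 0) h δ c 1 = ∅ := by
  ext ω
  simp only [FXev, if_neg one_ne_zero, mem_empty_iff_false, iff_false, zero_add, sub_zero]
  exact not_fEx_sSup_lt_and_sSup_lt hh hhT hδ hc (hBcont ω) (hB0 ω)

theorem not_condA_of_FXev_eq_empty {Ω : Type*} {m : MeasurableSpace Ω} {P : Measure Ω}
    [NeZero P] (ℱ : Filtration ℝ m) {T : ℝ} {X : ℝ → Ω → ℝ} {h δ c : ℝ} {j : ℤ}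
    (hh : h ∈ Ioo 0 T) (hδ : 0 < δ) (hc : 0 < c) (hj : j ∈ ({-1, 0, 1} : Set ℤ))
    (hempty : FXev X T (fun _ => 0) h δ c j = ∅) :
    ¬ CondA P ℱ T X := by
  intro hA
  have hpos := hA h hh (fun _ => 0) (isStoppingTime_const ℱ 0)
    (fun _ => ⟨le_rfl, sub_pos.2 hh.2⟩) δ hδ c hc j hj
  rw [hempty, indicator_empty, ← Pi.zero_def, condExp_zero] at hpos
  obtain ⟨ω, hω⟩ := hpos.exists
  exact lt_irrefl _ hω

/-- Remark 4.3 of the paper: there is no continuous path `w : [0,1] → ℝ` with `w(0) = 0`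
such that both `sup_{t∈[0,1/2]} (f(w(t)) − f(w(0))) < 1/2` and
`sup_{t∈[1/2,1)} (f(w(t)) − f(w(0))) < −1`; consequently, for any process `B` with
continuous paths started at `0`, the event `F_{f(B)}^1(0, 1/2, 1/2, 1)` has probability
zero, and the process `f(B)` does not satisfy condition (A) (with respect to any
filtration). -/
theorem example_fails_condA {Ω : Type*} {m : MeasurableSpace Ω} (P : Measure Ω)
    [IsProbabilityMeasure P] (B : ℝ → Ω → ℝ)
    (hBcont : ∀ ω, ContinuousOn (fun t => B t ω) (Icc 0 1))
    (hB0 : ∀ ω, B 0 ω = 0) :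
    (¬ ∃ w : ℝ → ℝ, ContinuousOn w (Icc 0 1) ∧ w 0 = 0 ∧
      sSup ((fun t => fEx (w t) - fEx (w 0)) '' Icc 0 (1/2)) < 1/2 ∧
      sSup ((fun t => fEx (w t) - fEx (w 0)) '' Ico (1/2) 1) < -1) ∧
    P (FXev (fun t ω => fEx (B t ω)) 1 (fun _ => 0) (1/2) (1/2) 1 1) = 0 ∧
    (∀ ℱ : Filtration ℝ m, ¬ CondA P ℱ 1 (fun t ω => fEx (B t ω))) := by
  have hempty : FXev (fun t ω => fEx (B t ω)) 1 (fun _ => 0) (1/2) (1/2) 1 1 = ∅ :=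
    FXev_fEx_one_eq_empty (by norm_num) (by norm_num) (by norm_num) le_rfl hBcont hB0
  refine ⟨?_, by rw [hempty, measure_empty], fun ℱ => ?_⟩
  · rintro ⟨w, hw, hw0, hsup_early, hsup_late⟩
    exact not_fEx_sSup_lt_and_sSup_lt (by norm_num) (by norm_num) (by norm_num) le_rfl hw hw0
      ⟨hsup_early, hsup_late⟩
  · exact not_condA_of_FXev_eq_empty ℱ (by norm_num) (by norm_num) one_pos (by simp) hempty

end
end
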